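/- arXiv:1901.09896 — 8 statements merged into one kernel-verified Lean document; each statement's English description precedes it below -/
import Mathlib

section
/- Let D be a positive squarefree integer and C a positive divisor of D. Then the sum, over all pairs (M, L) of positive divisors of D with M ≠ 1, D ∣ M·L and M·L ∣ D·C, of φ(gcd(M, L)) equals the sum, over all divisors d of D·C with d > 1, of φ(gcd(d, D·C/d)), where φ is Euler's totient function. -/
/-!
The map `(M, L) ↦ d = M · (C / gcd(L, C))`, with inverse `d ↦ (gcd(d, D), gcd(D·C/d, D))`, is a
bijection between the two index sets carrying `gcd(M, L)` to `gcd(d, D·C/d)`. Everything is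
checked one prime at a time: for `p ∣ C` the admissible exponent pairs `(1,0), (1,1), (0,1)` of
`(M, L)` go to the exponents `2, 1, 0` of `d`, for `p ∣ D/C` the pairs `(1,0), (0,1)` go to `1, 0`,
and in each case `min(v_p M, v_p L) = min(v_p d, v_p(DC) - v_p d)`. The conditions `M ≠ 1` and
`d > 1` match because `M ∣ d` and every prime factor of `d` divides `D`.
-/

open Finset

namespace Nat

lemma factorization_gcd_apply {a b : ℕ} (ha : a ≠ 0) (hb : b ≠ 0) (p : ℕ) :
    (a.gcd b).factorization p = min (a.factorization p) (b.factorization p) := by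
  rw [factorization_gcd ha hb, Finsupp.inf_apply]

lemma factorization_div_apply {a b : ℕ} (h : b ∣ a) (p : ℕ) :
    (a / b).factorization p = a.factorization p - b.factorization p := by
  rw [factorization_div h, Finsupp.tsub_apply]

lemma factorization_mul_apply {a b : ℕ} (ha : a ≠ 0) (hb : b ≠ 0) (p : ℕ) :
    (a * b).factorization p = a.factorization p + b.factorization p := by
  rw [factorization_mul ha hb, Finsupp.add_apply]

lemma dvd_iff_forall_factorization_le {a b : ℕ} (ha : a ≠ 0) (hb : b ≠ 0) :
    a ∣ b ↔ ∀ p, a.factorization p ≤ b.factorization p := by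
  rw [← factorization_le_iff_dvd ha hb, Finsupp.le_def]

lemma div_gcd_ne_zero {b : ℕ} (hb : b ≠ 0) (a : ℕ) : b / a.gcd b ≠ 0 :=
  (div_ne_zero_iff_of_dvd (gcd_dvd_right a b)).2 ⟨hb, gcd_ne_zero_right hb⟩

lemma factorization_mul_div_apply {a b d : ℕ} (ha : a ≠ 0) (hb : b ≠ 0) (hd : d ∣ a * b)
    (p : ℕ) :
    (a * b / d).factorization p = a.factorization p + b.factorization p - d.factorization p := by
  rw [factorization_div_apply hd, factorization_mul_apply ha hb]

lemma factorization_le_and_le_one_of_dvd_squarefree {C D : ℕ} (hD : Squarefree D) (hCD : C ∣ D)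
    (p : ℕ) : C.factorization p ≤ D.factorization p ∧ D.factorization p ≤ 1 :=
  ⟨(dvd_iff_forall_factorization_le (ne_zero_of_dvd_ne_zero hD.ne_zero hCD) hD.ne_zero).1 hCD p,
    hD.natFactorization_le_one p⟩

end Nat

def admissiblePairs (D C : ℕ) : Finset (ℕ × ℕ) :=
  (D.divisors ×ˢ D.divisors).filter (fun q => q.1 ≠ 1 ∧ D ∣ q.1 * q.2 ∧ q.1 * q.2 ∣ D * C)

def pairToDivisor (C : ℕ) (q : ℕ × ℕ) : ℕ := q.1 * (C / q.2.gcd C)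

def divisorToPair (D C d : ℕ) : ℕ × ℕ := (d.gcd D, (D * C / d).gcd D)

section

variable {D C : ℕ}

lemma mem_admissiblePairs_iff (hD : D ≠ 0) (hC : C ≠ 0) {q : ℕ × ℕ} :
    q ∈ admissiblePairs D C ↔ q.1 ≠ 0 ∧ q.2 ≠ 0 ∧ q.1 ≠ 1 ∧ ∀ p,
      q.1.factorization p ≤ D.factorization p ∧ q.2.factorization p ≤ D.factorization p ∧
      D.factorization p ≤ q.1.factorization p + q.2.factorization p ∧
      q.1.factorization p + q.2.factorization p ≤ D.factorization p + C.factorization p := by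
  obtain ⟨M, L⟩ := q
  simp only [admissiblePairs, mem_filter, mem_product, Nat.mem_divisors, and_iff_left hD]
  refine ⟨fun ⟨⟨hMD, hLD⟩, hM1, hDML, hMLDC⟩ => ?_, fun ⟨hM, hL, hM1, h⟩ => ?_⟩
  · have hM : M ≠ 0 := ne_zero_of_dvd_ne_zero hD hMD
    have hL : L ≠ 0 := ne_zero_of_dvd_ne_zero hD hLD
    rw [Nat.dvd_iff_forall_factorization_le hM hD] at hMD
    rw [Nat.dvd_iff_forall_factorization_le hL hD] at hLD
    rw [Nat.dvd_iff_forall_factorization_le hD (mul_ne_zero hM hL)] at hDML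
    rw [Nat.dvd_iff_forall_factorization_le (mul_ne_zero hM hL) (mul_ne_zero hD hC)] at hMLDC
    simp only [Nat.factorization_mul_apply hM hL, Nat.factorization_mul_apply hD hC] at hDML hMLDC
    exact ⟨hM, hL, hM1, fun p => ⟨hMD p, hLD p, hDML p, hMLDC p⟩⟩
  · simp only [Nat.dvd_iff_forall_factorization_le, hM, hL, hD, hC, mul_ne_zero,
      Nat.factorization_mul_apply, ne_eq, not_false_eq_true]
    exact ⟨⟨fun p => (h p).1, fun p => (h p).2.1⟩, hM1, fun p => (h p).2.2.1,
      fun p => (h p).2.2.2⟩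

lemma mem_divisors_filter_one_lt_iff (hD : D ≠ 0) (hC : C ≠ 0) {d : ℕ} :
    d ∈ (D * C).divisors.filter (1 < ·) ↔
      1 < d ∧ ∀ p, d.factorization p ≤ D.factorization p + C.factorization p := by
  simp only [mem_filter, Nat.mem_divisors, and_iff_left (mul_ne_zero hD hC)]
  refine and_comm.trans (and_congr_right fun hd => ?_)
  rw [Nat.dvd_iff_forall_factorization_le (by omega) (mul_ne_zero hD hC)]
  simp only [Nat.factorization_mul_apply hD hC]

lemma pairToDivisor_ne_zero (hC : C ≠ 0) {q : ℕ × ℕ} (hq : q.1 ≠ 0) :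
    pairToDivisor C q ≠ 0 :=
  mul_ne_zero hq (Nat.div_gcd_ne_zero hC q.2)

lemma factorization_pairToDivisor (hC : C ≠ 0) {q : ℕ × ℕ} (h₁ : q.1 ≠ 0) (h₂ : q.2 ≠ 0)
    (p : ℕ) : (pairToDivisor C q).factorization p = q.1.factorization p +
      (C.factorization p - min (q.2.factorization p) (C.factorization p)) := by
  rw [pairToDivisor, Nat.factorization_mul_apply h₁ (Nat.div_gcd_ne_zero hC q.2),
    Nat.factorization_div_apply (Nat.gcd_dvd_right q.2 C), Nat.factorization_gcd_apply h₂ hC]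

lemma factorization_divisorToPair_fst (hD : D ≠ 0) {d : ℕ} (hd : d ≠ 0) (p : ℕ) :
    (divisorToPair D C d).1.factorization p = min (d.factorization p) (D.factorization p) :=
  Nat.factorization_gcd_apply hd hD p

lemma factorization_divisorToPair_snd (hD : D ≠ 0) (hC : C ≠ 0) {d : ℕ} (hdDC : d ∣ D * C)
    (p : ℕ) : (divisorToPair D C d).2.factorization p =
      min (D.factorization p + C.factorization p - d.factorization p) (D.factorization p) := by
  have hDC := mul_ne_zero hD hC
  have hq : D * C / d ≠ 0 :=
    (Nat.div_ne_zero_iff_of_dvd hdDC).2 ⟨hDC, ne_zero_of_dvd_ne_zero hDC hdDC⟩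
  rw [divisorToPair, Nat.factorization_gcd_apply hq hD, Nat.factorization_mul_div_apply hD hC hdDC]

lemma gcd_ne_one_of_dvd_mul (hCD : C ∣ D) {d : ℕ} (hd : 1 < d) (hdDC : d ∣ D * C) :
    d.gcd D ≠ 1 := fun (hcop : d.Coprime D) =>
  hd.ne' <| (Nat.Coprime.mul_right hcop (hcop.coprime_dvd_right hCD)).eq_one_of_dvd hdDC

lemma pairToDivisor_mem (hD : Squarefree D) (hCD : C ∣ D) {q : ℕ × ℕ}
    (hq : q ∈ admissiblePairs D C) : pairToDivisor C q ∈ (D * C).divisors.filter (1 < ·) := by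
  have hD0 := hD.ne_zero
  have hC0 := ne_zero_of_dvd_ne_zero hD0 hCD
  obtain ⟨hM, hL, hM1, h⟩ := (mem_admissiblePairs_iff hD0 hC0).1 hq
  refine (mem_divisors_filter_one_lt_iff hD0 hC0).2 ⟨?_, fun p => ?_⟩
  · exact lt_of_lt_of_le (by omega) (Nat.le_of_dvd (Nat.pos_of_ne_zero
      (pairToDivisor_ne_zero hC0 hM)) (dvd_mul_right q.1 _))
  · rw [factorization_pairToDivisor hC0 hM hL]
    have := h p
    omega

lemma divisorToPair_mem (hD : Squarefree D) (hCD : C ∣ D) {d : ℕ}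
    (hd : d ∈ (D * C).divisors.filter (1 < ·)) : divisorToPair D C d ∈ admissiblePairs D C := by
  have hD0 := hD.ne_zero
  have hC0 := ne_zero_of_dvd_ne_zero hD0 hCD
  have hdDC := Nat.dvd_of_mem_divisors (mem_filter.1 hd).1
  obtain ⟨hd1, h⟩ := (mem_divisors_filter_one_lt_iff hD0 hC0).1 hd
  refine (mem_admissiblePairs_iff hD0 hC0).2 ⟨Nat.gcd_ne_zero_right hD0,
    Nat.gcd_ne_zero_right hD0, gcd_ne_one_of_dvd_mul hCD hd1 hdDC, fun p => ?_⟩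
  rw [factorization_divisorToPair_fst hD0 (by omega), factorization_divisorToPair_snd hD0 hC0 hdDC]
  have := h p
  have := Nat.factorization_le_and_le_one_of_dvd_squarefree hD hCD p
  omega

lemma divisorToPair_pairToDivisor (hD : Squarefree D) (hCD : C ∣ D) {q : ℕ × ℕ}
    (hq : q ∈ admissiblePairs D C) : divisorToPair D C (pairToDivisor C q) = q := by
  have hD0 := hD.ne_zero
  have hC0 := ne_zero_of_dvd_ne_zero hD0 hCD
  obtain ⟨hM, hL, -, h⟩ := (mem_admissiblePairs_iff hD0 hC0).1 hq
  have hdDC := Nat.dvd_of_mem_divisors (mem_filter.1 (pairToDivisor_mem hD hCD hq)).1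
  have hd0 := pairToDivisor_ne_zero hC0 hM
  refine Prod.ext (Nat.eq_of_factorization_eq (Nat.gcd_ne_zero_right hD0) hM fun p => ?_)
    (Nat.eq_of_factorization_eq (Nat.gcd_ne_zero_right hD0) hL fun p => ?_)
  · rw [factorization_divisorToPair_fst hD0 hd0, factorization_pairToDivisor hC0 hM hL]
    have := h p
    have := Nat.factorization_le_and_le_one_of_dvd_squarefree hD hCD p
    omega
  · rw [factorization_divisorToPair_snd hD0 hC0 hdDC, factorization_pairToDivisor hC0 hM hL]
    have := h p
    have := Nat.factorization_le_and_le_one_of_dvd_squarefree hD hCD p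
    omega

lemma pairToDivisor_divisorToPair (hD : Squarefree D) (hCD : C ∣ D) {d : ℕ}
    (hd : d ∈ (D * C).divisors.filter (1 < ·)) : pairToDivisor C (divisorToPair D C d) = d := by
  have hD0 := hD.ne_zero
  have hC0 := ne_zero_of_dvd_ne_zero hD0 hCD
  have hdDC := Nat.dvd_of_mem_divisors (mem_filter.1 hd).1
  obtain ⟨hd1, h⟩ := (mem_divisors_filter_one_lt_iff hD0 hC0).1 hd
  refine Nat.eq_of_factorization_eq (pairToDivisor_ne_zero hC0 (Nat.gcd_ne_zero_right hD0))
    (by omega) fun p => ?_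
  rw [factorization_pairToDivisor hC0 (Nat.gcd_ne_zero_right hD0) (Nat.gcd_ne_zero_right hD0),
    factorization_divisorToPair_fst hD0 (by omega), factorization_divisorToPair_snd hD0 hC0 hdDC]
  have := h p
  have := Nat.factorization_le_and_le_one_of_dvd_squarefree hD hCD p
  omega

lemma gcd_pairToDivisor (hD : Squarefree D) (hCD : C ∣ D) {q : ℕ × ℕ}
    (hq : q ∈ admissiblePairs D C) :
    (pairToDivisor C q).gcd (D * C / pairToDivisor C q) = q.1.gcd q.2 := by
  have hD0 := hD.ne_zero
  have hC0 := ne_zero_of_dvd_ne_zero hD0 hCD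
  obtain ⟨hM, hL, -, h⟩ := (mem_admissiblePairs_iff hD0 hC0).1 hq
  have hdDC := Nat.dvd_of_mem_divisors (mem_filter.1 (pairToDivisor_mem hD hCD hq)).1
  have hd0 := pairToDivisor_ne_zero hC0 hM
  have hq0 : D * C / pairToDivisor C q ≠ 0 :=
    (Nat.div_ne_zero_iff_of_dvd hdDC).2 ⟨mul_ne_zero hD0 hC0, hd0⟩
  refine Nat.eq_of_factorization_eq (Nat.gcd_ne_zero_left hd0) (Nat.gcd_ne_zero_left hM)
    fun p => ?_
  rw [Nat.factorization_gcd_apply hd0 hq0, Nat.factorization_gcd_apply hM hL,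
    Nat.factorization_mul_div_apply hD0 hC0 hdDC, factorization_pairToDivisor hC0 hM hL]
  have := h p
  have := Nat.factorization_le_and_le_one_of_dvd_squarefree hD hCD p
  omega

end

theorem stmt_0_general (D C : ℕ) (hsq : Squarefree D) (hC : C ∣ D) :
    ∑ q ∈ (D.divisors ×ˢ D.divisors).filter
        (fun q => q.1 ≠ 1 ∧ D ∣ q.1 * q.2 ∧ q.1 * q.2 ∣ D * C),
      Nat.totient (Nat.gcd q.1 q.2) =
    ∑ d ∈ (D * C).divisors.filter (fun d => 1 < d),
      Nat.totient (Nat.gcd d (D * C / d)) :=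
  sum_nbij' (pairToDivisor C) (divisorToPair D C) (fun _ => pairToDivisor_mem hsq hC)
    (fun _ => divisorToPair_mem hsq hC) (fun _ => divisorToPair_pairToDivisor hsq hC)
    (fun _ => pairToDivisor_divisorToPair hsq hC)
    (fun _ hq => by rw [gcd_pairToDivisor hsq hC hq])

/-- For `D` a positive squarefree integer and `C` a positive divisor of `D`,
the sum over pairs `(M, L)` of positive divisors of `D` with `M ≠ 1`, `D ∣ M·L` and
`M·L ∣ D·C` of `φ(gcd(M, L))` equals the sum over divisors `d > 1` of `D·C` of
`φ(gcd(d, D·C/d))`. -/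
theorem stmt_0 (D C : ℕ) (hD : 0 < D) (hsq : Squarefree D) (hC : C ∣ D) (hC0 : 0 < C) :
    ∑ q ∈ (D.divisors ×ˢ D.divisors).filter
        (fun q => q.1 ≠ 1 ∧ D ∣ q.1 * q.2 ∧ q.1 * q.2 ∣ D * C),
      Nat.totient (Nat.gcd q.1 q.2) =
    ∑ d ∈ (D * C).divisors.filter (fun d => 1 < d),
      Nat.totient (Nat.gcd d (D * C / d)) :=
  stmt_0_general D C hsq hC
end

section
/- Let D be a positive squarefree integer and C a positive divisor of D. The map (r, s, t) ↦ r·s²·t is a bijection from the set of triples of positive integers (r, s, t) with r ∣ D/C, s ∣ C, t ∣ C and gcd(s, t) = 1 onto the set of positive divisors of D·C. Moreover, for every such triple, gcd(r·s²·t, (D·C)/(r·s²·t)) = t. -/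
/-!
Since `D = (D/C)·C` is squarefree, the factors `D/C` and `C` are coprime and squarefree, and
`D·C = (D/C)·C²`. A divisor of `(D/C)·C²` splits as `r·m` with `r ∣ D/C` and `m ∣ C²`, and
`m = s²·t` with `s = m / gcd(m, C)` and `t = gcd(m, C) / s`. Writing `D/C = r·r'` and
`C = s·t·u`, the cofactor of `r·s²·t` is `r'·t·u²`, and `r, s, r', u` are pairwise coprime,
so the gcd is exactly `t`. The triple is recovered from `n = r·s²·t` as `r = gcd(D/C, n)`,
`t = gcd(n, D·C/n)`, and then `s` by cancellation.
-/

namespace Nat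

variable {E C r s t : ℕ}

lemma Coprime.of_squarefree_of_mul_dvd {a b n : ℕ} (hn : Squarefree n) (h : a * b ∣ n) :
    Coprime a b :=
  coprime_of_squarefree_mul (hn.squarefree_of_dvd h)

theorem exists_sq_mul_eq_of_dvd_sq {m : ℕ} (hC : Squarefree C) (hm : m ∣ C ^ 2) :
    ∃ s t, s ∣ C ∧ t ∣ C ∧ Coprime s t ∧ s ^ 2 * t = m := by
  have hm0 : m ≠ 0 := ne_zero_of_dvd_ne_zero (pow_ne_zero 2 hC.ne_zero) hm
  set g := gcd m C
  have hg0 : 0 < g := gcd_pos_of_pos_left C (pos_of_ne_zero hm0)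
  have hgm : g ∣ m := gcd_dvd_left m C
  have hgC : g ∣ C := gcd_dvd_right m C
  -- `m / g` is coprime to `C / g` and divides `(C / g) * C`.
  have hsC : m / g ∣ C := by
    refine (coprime_div_gcd_div_gcd hg0).dvd_of_dvd_mul_left (k := m / g) ?_
    refine (Nat.mul_dvd_mul_iff_left hg0).mp ?_
    rw [Nat.mul_div_cancel' hgm, ← mul_assoc, Nat.mul_div_cancel' hgC, ← sq]
    exact hm
  have hsg : m / g ∣ g := dvd_gcd (div_dvd_of_dvd hgm) hsC
  refine ⟨m / g, g / (m / g), hsC, (div_dvd_of_dvd hsg).trans hgC,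
    Coprime.of_squarefree_of_mul_dvd hC ?_, ?_⟩
  · rwa [Nat.mul_div_cancel' hsg]
  · rw [sq, mul_assoc, Nat.mul_div_cancel' hsg, Nat.div_mul_cancel hgm]

theorem mem_filter_coprime_divisors_product (hE0 : E ≠ 0) (hC0 : C ≠ 0) :
    (r, s, t) ∈ (E.divisors ×ˢ C.divisors ×ˢ C.divisors).filter (fun x => gcd x.2.1 x.2.2 = 1) ↔
      r ∣ E ∧ s ∣ C ∧ t ∣ C ∧ Coprime s t := by
  simp [hE0, hC0, coprime_iff_gcd_eq_one, and_assoc]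

section

variable (h : Squarefree (E * C))
include h

theorem gcd_mul_sq_mul_div_eq (hr : r ∣ E) (hs : s ∣ C) (ht : t ∣ C) (hst : Coprime s t) :
    gcd (r * s ^ 2 * t) (E * C ^ 2 / (r * s ^ 2 * t)) = t := by
  obtain ⟨r', rfl⟩ := hr
  obtain ⟨u, rfl⟩ := hst.mul_dvd_of_dvd_of_dvd hs ht
  obtain ⟨⟨hr0, -⟩, ⟨hs0, ht0⟩, -⟩ :
      (r ≠ 0 ∧ r' ≠ 0) ∧ (s ≠ 0 ∧ t ≠ 0) ∧ u ≠ 0 := by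
    simpa only [mul_ne_zero_iff] using h.ne_zero
  have hcofactor : r * r' * (s * t * u) ^ 2 / (r * s ^ 2 * t) = t * (r' * u ^ 2) :=
    Nat.div_eq_of_eq_mul_left (by positivity) (by ring)
  have hcop : Coprime (r * s) (r' * u) :=
    Coprime.of_squarefree_of_mul_dvd h ⟨t, by ring⟩
  have hcop' : Coprime (r * s ^ 2) (r' * u ^ 2) :=
    ((hcop.pow 2 2).coprime_dvd_left ⟨r, by ring⟩).coprime_dvd_right ⟨r', by ring⟩
  rw [hcofactor, mul_comm _ t, gcd_mul_left, hcop', mul_one]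

theorem gcd_mul_sq_mul_eq (hr : r ∣ E) (hs : s ∣ C) (ht : t ∣ C) :
    gcd E (r * s ^ 2 * t) = r := by
  have hEC := coprime_of_squarefree_mul h
  have hcop : Coprime (s ^ 2 * t) E :=
    ((hEC.symm.coprime_dvd_left hs).pow_left 2).mul_left (hEC.symm.coprime_dvd_left ht)
  rw [mul_assoc, hcop.gcd_mul_right_cancel_right, gcd_eq_right hr]

theorem bijOn_mul_sq_mul_divisors :
    Set.BijOn (fun x : ℕ × ℕ × ℕ => x.1 * x.2.1 ^ 2 * x.2.2)
      ((E.divisors ×ˢ C.divisors ×ˢ C.divisors).filter (fun x => gcd x.2.1 x.2.2 = 1))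
      (E * C ^ 2).divisors := by
  obtain ⟨hE0, hC0⟩ := mul_ne_zero_iff.mp h.ne_zero
  have hC := (squarefree_mul_iff.mp h).2.2
  refine ⟨?mapsTo, ?injOn, ?surjOn⟩
  case mapsTo =>
    rintro ⟨r, s, t⟩ hx
    obtain ⟨hr, hs, ht, hst⟩ := (mem_filter_coprime_divisors_product hE0 hC0).mp hx
    refine Finset.mem_coe.mpr (mem_divisors.mpr ⟨?_, by positivity⟩)
    calc r * s ^ 2 * t = r * (s * (s * t)) := by ring
      _ ∣ E * (C * C) := mul_dvd_mul hr (mul_dvd_mul hs (hst.mul_dvd_of_dvd_of_dvd hs ht))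
      _ = E * C ^ 2 := by ring
  case injOn =>
    rintro ⟨r, s, t⟩ hx ⟨r', s', t'⟩ hy (hxy : r * s ^ 2 * t = r' * s' ^ 2 * t')
    obtain ⟨hr, hs, ht, hst⟩ := (mem_filter_coprime_divisors_product hE0 hC0).mp hx
    obtain ⟨hr', hs', ht', hst'⟩ := (mem_filter_coprime_divisors_product hE0 hC0).mp hy
    have hrr' : r = r' := by
      rw [← gcd_mul_sq_mul_eq h hr hs ht, ← gcd_mul_sq_mul_eq h hr' hs' ht', hxy]
    have htt' : t = t' := by
      rw [← gcd_mul_sq_mul_div_eq h hr hs ht hst, ← gcd_mul_sq_mul_div_eq h hr' hs' ht' hst',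
        hxy]
    subst hrr' htt'
    have hr0 : r ≠ 0 := ne_zero_of_dvd_ne_zero hE0 hr
    have ht0 : t ≠ 0 := ne_zero_of_dvd_ne_zero hC0 ht
    have hss' : s ^ 2 = s' ^ 2 := by
      simpa only [mul_right_cancel_iff_of_pos (pos_of_ne_zero ht0),
        mul_left_cancel_iff_of_pos (pos_of_ne_zero hr0)] using hxy
    rw [Nat.pow_left_injective two_ne_zero hss']
  case surjOn =>
    intro n hn
    obtain ⟨r, m, hr, hm, rfl⟩ := exists_dvd_and_dvd_of_dvd_mul (mem_divisors.mp hn).1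
    obtain ⟨s, t, hs, ht, hst, rfl⟩ := exists_sq_mul_eq_of_dvd_sq hC hm
    exact ⟨⟨r, s, t⟩, (mem_filter_coprime_divisors_product hE0 hC0).mpr ⟨hr, hs, ht, hst⟩,
      by simp only [mul_assoc]⟩

end

end Nat

theorem stmt_3_general (D C : ℕ) (hsq : Squarefree D) (hC : C ∣ D) :
    Set.BijOn (fun x : ℕ × ℕ × ℕ => x.1 * x.2.1 ^ 2 * x.2.2)
      ((((D / C).divisors ×ˢ C.divisors ×ˢ C.divisors).filter
          (fun x => Nat.gcd x.2.1 x.2.2 = 1) : Finset (ℕ × ℕ × ℕ)) : Set (ℕ × ℕ × ℕ))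
      (((D * C).divisors : Finset ℕ) : Set ℕ) ∧
    ∀ r s t : ℕ, r ∣ D / C → s ∣ C → t ∣ C → Nat.gcd s t = 1 →
      Nat.gcd (r * s ^ 2 * t) (D * C / (r * s ^ 2 * t)) = t := by
  have hDC : D * C = D / C * C ^ 2 := by rw [sq, ← mul_assoc, Nat.div_mul_cancel hC]
  have h : Squarefree (D / C * C) := by rwa [Nat.div_mul_cancel hC]
  rw [hDC]
  exact ⟨Nat.bijOn_mul_sq_mul_divisors h,
    fun r s t hr hs ht hst => Nat.gcd_mul_sq_mul_div_eq h hr hs ht hst⟩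

/-- For `D` a positive squarefree integer and `C` a positive divisor of `D`,
the map `(r, s, t) ↦ r·s²·t` is a bijection from the set of triples of positive integers
with `r ∣ D/C`, `s ∣ C`, `t ∣ C` and `gcd(s, t) = 1` onto the divisors of `D·C`, and for
every such triple `gcd(r·s²·t, (D·C)/(r·s²·t)) = t`. -/
theorem stmt_3 (D C : ℕ) (hD : 0 < D) (hsq : Squarefree D) (hC : C ∣ D) (hC0 : 0 < C) :
    Set.BijOn (fun x : ℕ × ℕ × ℕ => x.1 * x.2.1 ^ 2 * x.2.2)
      ((((D / C).divisors ×ˢ C.divisors ×ˢ C.divisors).filter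
          (fun x => Nat.gcd x.2.1 x.2.2 = 1) : Finset (ℕ × ℕ × ℕ)) : Set (ℕ × ℕ × ℕ))
      (((D * C).divisors : Finset ℕ) : Set ℕ) ∧
    ∀ r s t : ℕ, r ∣ D / C → s ∣ C → t ∣ C → Nat.gcd s t = 1 →
      Nat.gcd (r * s ^ 2 * t) (D * C / (r * s ^ 2 * t)) = t :=
  stmt_3_general D C hsq hC
end

section
/- Let D be a positive squarefree integer and C a positive divisor of D. For i = 1, 2, let r_i, s_i, t_i be positive integers with r_i ∣ D/C, s_i ∣ C, t_i ∣ C and gcd(s_i, t_i) = 1, and let x_i be integers with gcd(x_i, D) = 1. Set q_i = (r_i·s_i²·t_i·x_i)/(D·C) ∈ ℚ. If there exist integers α, β, δ, ω with α·ω − β·(D·C)·δ = 1 and α·q₁ + β = q₂·((D·C)·δ·q₁ + ω), then r₁ = r₂, s₁ = s₂, t₁ = t₂, and t₁ divides x₁ − x₂. -/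
/-!
A unimodular matrix sends a fraction `x/c` in lowest terms to `(αx + βc)/(Nδx + ωc)`, again in
lowest terms, so comparing with `x₂/c₂` gives a sign `ε` with `Nδx₁ + ωc₁ = εc₂` and
`αx₁ + βc₁ = εx₂`. Since `c₁, c₂ ∣ N` and `ω` is prime to `N`, this forces `c₁ = c₂ = c`, and then
`x₁ ≡ x₂` modulo every common divisor of `c` and `N/c`. The cusp representative
`r s² t x/(DC)` has reduced denominator `DC/(r s² t)`, so `r s² t` is an invariant; it determines
`r = gcd(r s² t, D/C)` and, `C` being squarefree, `st = gcd(s² t, C)`, hence `s` and `t`.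
-/

theorem IsCoprime.mul_add_mul_of_det_eq_one {R : Type*} [CommRing R] {a b c d x y : R}
    (hdet : a * d - b * c = 1) (h : IsCoprime x y) :
    IsCoprime (a * x + b * y) (c * x + d * y) := by
  obtain ⟨u, v, huv⟩ := h
  -- `(x, y)` is recovered from its image by the inverse matrix `((d, -b), (-c, a))`.
  exact ⟨u * d - v * c, v * a - u * b, by linear_combination (u * x + v * y) * hdet + huv⟩

theorem exists_unit_of_mul_eq_mul_of_isCoprime {R : Type*} [CommRing R] [IsDomain R]
    {a b x y : R} (hab : IsCoprime a b) (hxy : IsCoprime x y) (hy : y ≠ 0)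
    (h : y * a = x * b) : ∃ u : Rˣ, b = y * u ∧ a = x * u := by
  have hby : b ∣ y := hab.symm.dvd_of_dvd_mul_right ⟨x, by rw [h, mul_comm]⟩
  have hyb : y ∣ b := hxy.symm.dvd_of_dvd_mul_left ⟨a, h.symm⟩
  obtain ⟨u, hu⟩ := associated_of_dvd_dvd hyb hby
  refine ⟨u, hu.symm, mul_left_cancel₀ hy ?_⟩
  rw [h, ← hu]; ring

theorem Nat.gcd_sq_mul_eq_mul_of_squarefree {C s t : ℕ} (hC : Squarefree C) (hs : s ∣ C)
    (ht : t ∣ C) (hst : s.Coprime t) : Nat.gcd (s ^ 2 * t) C = s * t := by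
  apply Nat.dvd_antisymm
  · have hsq : Squarefree (Nat.gcd (s ^ 2 * t) C) := hC.squarefree_of_dvd (Nat.gcd_dvd_right _ _)
    exact (hsq.dvd_pow_iff_dvd two_ne_zero).mp ((Nat.gcd_dvd_left _ _).trans ⟨t, by ring⟩)
  · exact Nat.dvd_gcd ⟨s, by ring⟩ (hst.mul_dvd_of_dvd_of_dvd hs ht)

namespace Gamma0

variable {N x₁ x₂ c₁ c₂ α β δ ω : ℤ}

theorem int_eq_of_moebius_eq (hc₁ : c₁ ≠ 0) (hc₂ : c₂ ≠ 0)
    (h : (α : ℚ) * (x₁ / c₁) + β = x₂ / c₂ * (N * δ * (x₁ / c₁) + ω)) :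
    c₂ * (α * x₁ + β * c₁) = x₂ * (N * δ * x₁ + ω * c₁) := by
  field_simp at h
  exact_mod_cast (by push_cast; linear_combination h :
    ((c₂ * (α * x₁ + β * c₁) : ℤ) : ℚ) = ((x₂ * (N * δ * x₁ + ω * c₁) : ℤ) : ℚ))

theorem den_eq_of_moebius_eq (hc₁ : 0 < c₁) (hc₂ : 0 < c₂) (hc₁N : c₁ ∣ N) (hc₂N : c₂ ∣ N)
    (hdet : α * ω - β * N * δ = 1) (u : ℤˣ) (hB : N * δ * x₁ + ω * c₁ = c₂ * u) :
    c₁ = c₂ := by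
  have hωN : IsCoprime ω N := ⟨α, -(β * δ), by linear_combination hdet⟩
  have h₁₂ : c₁ ∣ c₂ := by
    rw [← Units.dvd_mul_right (u := u), ← hB]
    exact dvd_add (dvd_mul_of_dvd_left (dvd_mul_of_dvd_left hc₁N _) _) (dvd_mul_left _ _)
  have h₂₁ : c₂ ∣ c₁ := by
    refine (hωN.of_isCoprime_of_dvd_right hc₂N).symm.dvd_of_dvd_mul_left ?_
    rw [show ω * c₁ = c₂ * u - N * δ * x₁ by rw [← hB]; ring]
    exact dvd_sub (dvd_mul_right _ _) (dvd_mul_of_dvd_left (dvd_mul_of_dvd_left hc₂N _) _)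
  exact Int.dvd_antisymm hc₁.le hc₂.le h₁₂ h₂₁

theorem dvd_sub_of_moebius_eq {g c t : ℤ} (hc : c ≠ 0) (hdet : α * ω - β * (g * c) * δ = 1)
    (u : ℤˣ) (hB : g * c * δ * x₁ + ω * c = c * u) (hA : α * x₁ + β * c = x₂ * u)
    (htg : t ∣ g) (htc : t ∣ c) : t ∣ x₁ - x₂ := by
  have hω : (u : ℤ) - ω = g * δ * x₁ := mul_right_cancel₀ hc (by linear_combination -hB)
  have huα : α * u - 1 = g * (α * δ * x₁ + β * c * δ) := by
    linear_combination α * hω + hdet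
  have huu : (u : ℤ) * u = 1 := by rw [← Units.val_mul, Int.units_mul_self, Units.val_one]
  rw [show x₁ - x₂ = -(g * (α * δ * x₁ + β * c * δ)) * x₁ - u * β * c by
    linear_combination (u : ℤ) * hA + x₂ * huu - x₁ * huα]
  exact dvd_sub ((dvd_neg.mpr (htg.mul_right _)).mul_right _) (htc.mul_left _)

theorem den_eq_and_dvd_sub_of_moebius_eq {g : ℤ} (hc₁ : 0 < c₁) (hc₂ : 0 < c₂) (hN : N = g * c₁)
    (hc₂N : c₂ ∣ N) (hx₁ : IsCoprime x₁ c₁) (hx₂ : IsCoprime x₂ c₂)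
    (hdet : α * ω - β * N * δ = 1)
    (h : (α : ℚ) * (x₁ / c₁) + β = x₂ / c₂ * (N * δ * (x₁ / c₁) + ω)) :
    c₁ = c₂ ∧ ∀ t, t ∣ g → t ∣ c₁ → t ∣ x₁ - x₂ := by
  have hreduced := hx₁.mul_add_mul_of_det_eq_one (a := α) (b := β) (c := N * δ) (d := ω)
    (by linear_combination hdet)
  obtain ⟨u, hB, hA⟩ := exists_unit_of_mul_eq_mul_of_isCoprime hreduced hx₂ hc₂.ne'
    (int_eq_of_moebius_eq hc₁.ne' hc₂.ne' h)
  obtain rfl := den_eq_of_moebius_eq hc₁ hc₂ (hN ▸ dvd_mul_left _ _) hc₂N hdet u hB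
  subst hN
  exact ⟨rfl, fun t htg htc ↦ dvd_sub_of_moebius_eq hc₁.ne' hdet u hB hA htg htc⟩

end Gamma0

theorem exists_reduced_cusp_rep {D C M r s t : ℕ} {x : ℤ} (hDM : D = C * M) (hD : D ≠ 0)
    (hr : r ∣ M) (hs : s ∣ C) (ht : t ∣ C) (hst : s.Coprime t) (hx : IsCoprime x D) :
    ∃ c : ℕ, 0 < c ∧ r * s ^ 2 * t * c = D * C ∧ t ∣ c ∧ IsCoprime x c ∧
      (r * s ^ 2 * t : ℚ) * x / (D * C) = x / c := by
  obtain ⟨k, hk⟩ := mul_dvd_mul hr (pow_dvd_pow_of_dvd (hst.mul_dvd_of_dvd_of_dvd hs ht) 2)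
  have hgc : r * s ^ 2 * t * (t * k) = D * C := by rw [hDM]; linear_combination hk.symm
  have hgc0 : r * s ^ 2 * t * (t * k) ≠ 0 := hgc ▸ mul_ne_zero hD (left_ne_zero_of_mul (hDM ▸ hD))
  have hcD : t * k ∣ D ^ 2 := (Dvd.intro_left _ hgc).trans (sq D ▸ mul_dvd_mul_left D ⟨M, hDM⟩)
  refine ⟨t * k, Nat.pos_of_ne_zero (right_ne_zero_of_mul hgc0), hgc, dvd_mul_right _ _,
    (hx.pow_right (n := 2)).of_isCoprime_of_dvd_right (by exact_mod_cast hcD), ?_⟩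
  have hg : (r * s ^ 2 * t : ℚ) ≠ 0 := by exact_mod_cast left_ne_zero_of_mul hgc0
  have hgcQ : (D * C : ℚ) = (r * s ^ 2 * t : ℚ) * ((t * k : ℕ) : ℚ) := by exact_mod_cast hgc.symm
  rw [hgcQ, mul_div_mul_left _ _ hg]

theorem eq_of_mul_sq_mul_eq {C M r₁ s₁ t₁ r₂ s₂ t₂ : ℕ} (hCM : Squarefree (C * M))
    (hr₁ : r₁ ∣ M) (hs₁ : s₁ ∣ C) (ht₁ : t₁ ∣ C) (hst₁ : s₁.Coprime t₁)
    (hr₂ : r₂ ∣ M) (hs₂ : s₂ ∣ C) (ht₂ : t₂ ∣ C) (hst₂ : s₂.Coprime t₂)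
    (h : r₁ * s₁ ^ 2 * t₁ = r₂ * s₂ ^ 2 * t₂) : r₁ = r₂ ∧ s₁ = s₂ ∧ t₁ = t₂ := by
  obtain ⟨hcop, hC, -⟩ := Nat.squarefree_mul_iff.mp hCM
  have hC0 : C ≠ 0 := left_ne_zero_of_mul hCM.ne_zero
  have hM0 : M ≠ 0 := right_ne_zero_of_mul hCM.ne_zero
  have hgcd_M {r s t : ℕ} (hr : r ∣ M) (hs : s ∣ C) (ht : t ∣ C) :
      Nat.gcd (r * s ^ 2 * t) M = r := by
    rw [mul_assoc, Nat.Coprime.gcd_mul_right_cancel r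
      (((hcop.coprime_dvd_left hs).pow_left 2).mul_left (hcop.coprime_dvd_left ht)),
      Nat.gcd_eq_left hr]
  obtain rfl : r₁ = r₂ := by rw [← hgcd_M hr₁ hs₁ ht₁, ← hgcd_M hr₂ hs₂ ht₂, h]
  have hsq : s₁ ^ 2 * t₁ = s₂ ^ 2 * t₂ := by
    simpa only [mul_assoc, mul_right_inj' (ne_zero_of_dvd_ne_zero hM0 hr₁)] using h
  have hst : s₁ * t₁ = s₂ * t₂ := by
    rw [← Nat.gcd_sq_mul_eq_mul_of_squarefree hC hs₁ ht₁ hst₁,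
      ← Nat.gcd_sq_mul_eq_mul_of_squarefree hC hs₂ ht₂ hst₂, hsq]
  have hst0 : s₁ * t₁ ≠ 0 := ne_zero_of_dvd_ne_zero hC0 (hst₁.mul_dvd_of_dvd_of_dvd hs₁ ht₁)
  obtain rfl : s₁ = s₂ := mul_right_cancel₀ hst0 (by linear_combination hsq - s₂ * hst)
  exact ⟨rfl, rfl, mul_left_cancel₀ (left_ne_zero_of_mul hst0) hst⟩

theorem stmt_4_general (D C : ℕ) (hsq : Squarefree D) (hC : C ∣ D)
    (r₁ s₁ t₁ r₂ s₂ t₂ : ℕ) (x₁ x₂ : ℤ)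
    (hr₁ : r₁ ∣ D / C) (hs₁ : s₁ ∣ C) (ht₁ : t₁ ∣ C) (hst₁ : Nat.gcd s₁ t₁ = 1)
    (hr₂ : r₂ ∣ D / C) (hs₂ : s₂ ∣ C) (ht₂ : t₂ ∣ C) (hst₂ : Nat.gcd s₂ t₂ = 1)
    (hx₁ : Int.gcd x₁ (D : ℤ) = 1) (hx₂ : Int.gcd x₂ (D : ℤ) = 1)
    (q₁ q₂ : ℚ)
    (hq₁ : q₁ = (r₁ * s₁ ^ 2 * t₁ : ℚ) * (x₁ : ℚ) / (D * C : ℚ))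
    (hq₂ : q₂ = (r₂ * s₂ ^ 2 * t₂ : ℚ) * (x₂ : ℚ) / (D * C : ℚ))
    (α β δ ω : ℤ)
    (hdet : α * ω - β * ((D : ℤ) * C) * δ = 1)
    (heq : (α : ℚ) * q₁ + (β : ℚ) = q₂ * ((D * C : ℚ) * (δ : ℚ) * q₁ + (ω : ℚ))) :
    r₁ = r₂ ∧ s₁ = s₂ ∧ t₁ = t₂ ∧ (t₁ : ℤ) ∣ x₁ - x₂ := by
  obtain ⟨M, hDM⟩ := hC
  have hC0 : 0 < C := Nat.pos_of_ne_zero (left_ne_zero_of_mul (hDM ▸ hsq.ne_zero))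
  rw [hDM, Nat.mul_div_cancel_left _ hC0] at hr₁ hr₂
  obtain ⟨c₁, hc₁0, hc₁, htc₁, hxc₁, hq₁'⟩ := exists_reduced_cusp_rep hDM hsq.ne_zero hr₁ hs₁ ht₁
    hst₁ (Int.isCoprime_iff_gcd_eq_one.mpr hx₁)
  obtain ⟨c₂, hc₂0, hc₂, -, hxc₂, hq₂'⟩ := exists_reduced_cusp_rep hDM hsq.ne_zero hr₂ hs₂ ht₂
    hst₂ (Int.isCoprime_iff_gcd_eq_one.mpr hx₂)
  rw [hq₁, hq₁', hq₂, hq₂'] at heq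
  obtain ⟨hc, hdvd⟩ := Gamma0.den_eq_and_dvd_sub_of_moebius_eq (N := D * C)
    (g := ((r₁ * s₁ ^ 2 * t₁ : ℕ) : ℤ)) (Int.natCast_pos.mpr hc₁0) (Int.natCast_pos.mpr hc₂0)
    (by exact_mod_cast hc₁.symm) (by exact_mod_cast Dvd.intro_left _ hc₂) hxc₁ hxc₂ hdet
    (by push_cast at heq ⊢; exact heq)
  have hg : r₁ * s₁ ^ 2 * t₁ = r₂ * s₂ ^ 2 * t₂ :=
    Nat.eq_of_mul_eq_mul_right hc₁0 (hc₁.trans (by rw [Int.natCast_inj.mp hc, hc₂]))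
  obtain ⟨rfl, rfl, rfl⟩ :=
    eq_of_mul_sq_mul_eq (hDM ▸ hsq) hr₁ hs₁ ht₁ hst₁ hr₂ hs₂ ht₂ hst₂ hg
  exact ⟨rfl, rfl, rfl, hdvd t₁ (by exact_mod_cast Dvd.intro_left _ rfl) (by exact_mod_cast htc₁)⟩

/-- the representatives `(r·s²·t·x)/(D·C)` of the cusps of `X₀(DC)` are
pairwise `Γ₀(DC)`-inequivalent: if two of them are related by a matrix of `Γ₀(DC)` under
the Möbius action, then `r₁ = r₂`, `s₁ = s₂`, `t₁ = t₂` and `t₁ ∣ x₁ − x₂`. -/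
theorem stmt_4 (D C : ℕ) (hD : 0 < D) (hsq : Squarefree D) (hC : C ∣ D) (hC0 : 0 < C)
    (r₁ s₁ t₁ r₂ s₂ t₂ : ℕ) (x₁ x₂ : ℤ)
    (hr₁0 : 0 < r₁) (hs₁0 : 0 < s₁) (ht₁0 : 0 < t₁)
    (hr₂0 : 0 < r₂) (hs₂0 : 0 < s₂) (ht₂0 : 0 < t₂)
    (hr₁ : r₁ ∣ D / C) (hs₁ : s₁ ∣ C) (ht₁ : t₁ ∣ C) (hst₁ : Nat.gcd s₁ t₁ = 1)
    (hr₂ : r₂ ∣ D / C) (hs₂ : s₂ ∣ C) (ht₂ : t₂ ∣ C) (hst₂ : Nat.gcd s₂ t₂ = 1)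
    (hx₁ : Int.gcd x₁ (D : ℤ) = 1) (hx₂ : Int.gcd x₂ (D : ℤ) = 1)
    (q₁ q₂ : ℚ)
    (hq₁ : q₁ = (r₁ * s₁ ^ 2 * t₁ : ℚ) * (x₁ : ℚ) / (D * C : ℚ))
    (hq₂ : q₂ = (r₂ * s₂ ^ 2 * t₂ : ℚ) * (x₂ : ℚ) / (D * C : ℚ))
    (α β δ ω : ℤ)
    (hdet : α * ω - β * ((D : ℤ) * C) * δ = 1)
    (heq : (α : ℚ) * q₁ + (β : ℚ) = q₂ * ((D * C : ℚ) * (δ : ℚ) * q₁ + (ω : ℚ))) :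
    r₁ = r₂ ∧ s₁ = s₂ ∧ t₁ = t₂ ∧ (t₁ : ℤ) ∣ x₁ - x₂ :=
  stmt_4_general D C hsq hC r₁ s₁ t₁ r₂ s₂ t₂ x₁ x₂ hr₁ hs₁ ht₁ hst₁ hr₂ hs₂ ht₂ hst₂ hx₁ hx₂ q₁ q₂
    hq₁ hq₂ α β δ ω hdet heq
end

section
/- Let D be a positive squarefree integer and C a positive divisor of D. Let r, s, t be positive integers with r ∣ D/C, s ∣ C, t ∣ C and gcd(s, t) = 1, and let x be an integer with gcd(x, D) = 1. Let p be a prime with p ∣ D/C and p ∤ r. Then the rational numbers (r·s²·t·x)/(D·C) and (r·s²·t·p·x)/((D·C)/p) are Γ₀((D·C)/p)-equivalent; that is, there exist integers α, β, δ, ω with α·ω − β·((D·C)/p)·δ = 1 such that α·q₁ + β = q₂·(((D·C)/p)·δ·q₁ + ω), where q₁ = (r·s²·t·x)/(D·C) and q₂ = (r·s²·t·p·x)/((D·C)/p). -/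
/-!
With `a = r s² t x` and `N = D C / p`, the cusps are `a / (N p)` and `a p / N`. Squarefreeness of
`D` gives `p ∤ C` and `p ∤ N`, so `p` is coprime to `a N`, and a Bézout relation for `p` and `a N`
writes down a matrix of `Γ₀(N)` carrying one cusp to the other.
-/

def Gamma0Equivalent (n : ℕ) (q₁ q₂ : ℚ) : Prop :=
  ∃ α β δ ω : ℤ, α * ω - β * (n : ℤ) * δ = 1 ∧
    (α : ℚ) * q₁ + (β : ℚ) = q₂ * ((n : ℚ) * (δ : ℚ) * q₁ + (ω : ℚ))

/-- From a Bézout relation `u p + v a n = 1`, the matrix `[[p (2 - p u), -a² v], [n² v, u]]`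
lies in `Γ₀(n)` and sends `a / (n p)` to `a p / n`. -/
theorem gamma0Equivalent_div_mul_of_isCoprime (a : ℤ) {n p : ℕ} (hn : n ≠ 0) (hp : p ≠ 0)
    (h : IsCoprime (p : ℤ) (a * n)) :
    Gamma0Equivalent n (a / (n * p)) (a * p / n) := by
  obtain ⟨u, v, huv⟩ := h
  refine ⟨p * (2 - p * u), -(a ^ 2 * v), v * n, u, ?_, ?_⟩
  · linear_combination (1 - (p : ℤ) * u + a * v * n) * huv
  · have huvQ : (u : ℚ) * p + v * (a * n) = 1 := by exact_mod_cast huv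
    push_cast
    field_simp
    linear_combination (-2 * (a : ℚ)) * huvQ

namespace Nat.Prime

variable {p D C : ℕ}

theorem not_dvd_of_dvd_div_of_squarefree (hp : p.Prime) (hsq : Squarefree D) (hC : C ∣ D)
    (hpD : p ∣ D / C) : ¬ p ∣ C := by
  have hcop : (D / C).Coprime C :=
    Nat.coprime_of_squarefree_mul (by rwa [Nat.div_mul_cancel hC])
  exact fun hpC => hp.one_lt.ne' (Nat.eq_one_of_dvd_coprimes hcop hpD hpC)

theorem not_dvd_div_self_of_squarefree (hp : p.Prime) (hsq : Squarefree D) (hpD : p ∣ D) :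
    ¬ p ∣ D / p := fun h =>
  hp.one_lt.ne' (Nat.isUnit_iff.mp (hsq p (Nat.mul_dvd_of_dvd_div hpD h)))

theorem not_dvd_mul_div_self_of_squarefree (hp : p.Prime) (hsq : Squarefree D) (hpD : p ∣ D)
    (hpC : ¬ p ∣ C) : ¬ p ∣ D * C / p := by
  rw [Nat.mul_div_right_comm hpD, hp.dvd_mul, not_or]
  exact ⟨hp.not_dvd_div_self_of_squarefree hsq hpD, hpC⟩

end Nat.Prime

theorem stmt_5_general (D C : ℕ) (hsq : Squarefree D) (hC : C ∣ D)
    (r s t : ℕ)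
    (hs : s ∣ C) (ht : t ∣ C)
    (x : ℤ) (hx : Int.gcd x (D : ℤ) = 1)
    (p : ℕ) (hp : p.Prime) (hpD : p ∣ D / C) (hpr : ¬ p ∣ r)
    (q₁ q₂ : ℚ)
    (hq₁ : q₁ = (r * s ^ 2 * t : ℚ) * (x : ℚ) / (D * C : ℚ))
    (hq₂ : q₂ = (r * s ^ 2 * t * p : ℚ) * (x : ℚ) / ((D * C / p : ℕ) : ℚ)) :
    ∃ α β δ ω : ℤ,
      α * ω - β * ((D * C / p : ℕ) : ℤ) * δ = 1 ∧
      (α : ℚ) * q₁ + (β : ℚ) = q₂ * (((D * C / p : ℕ) : ℚ) * (δ : ℚ) * q₁ + (ω : ℚ)) := by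
  have hpD' : p ∣ D := hpD.trans (Nat.div_dvd_of_dvd hC)
  have hpC : ¬ p ∣ C := hp.not_dvd_of_dvd_div_of_squarefree hsq hC hpD
  have hpN : ¬ p ∣ D * C / p := hp.not_dvd_mul_div_self_of_squarefree hsq hpD' hpC
  have hcoprime : ∀ m : ℕ, ¬ p ∣ m → IsCoprime (p : ℤ) m := fun m hm =>
    Nat.isCoprime_iff_coprime.mpr ((hp.coprime_iff_not_dvd).mpr hm)
  have hps : IsCoprime (p : ℤ) s := hcoprime s fun h => hpC (h.trans hs)
  have hpt : IsCoprime (p : ℤ) t := hcoprime t fun h => hpC (h.trans ht)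
  have hpx : IsCoprime (p : ℤ) x :=
    (Int.isCoprime_iff_gcd_eq_one.mpr hx).symm.of_isCoprime_of_dvd_left (Int.ofNat_dvd.mpr hpD')
  have hpa : IsCoprime (p : ℤ) ((r * s ^ 2 * t : ℕ) * x * (D * C / p : ℕ)) := by
    push_cast
    exact ((((hcoprime r hpr).mul_right hps.pow_right).mul_right hpt).mul_right hpx).mul_right
      (hcoprime _ hpN)
  have hNp : ((D * C / p : ℕ) : ℚ) * p = D * C := by
    exact_mod_cast Nat.div_mul_cancel (hpD'.mul_right C)
  have hq₁' : q₁ = ((r * s ^ 2 * t : ℕ) * x : ℤ) / ((D * C / p : ℕ) * p) := by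
    rw [hq₁, hNp]; push_cast; ring
  have hq₂' : q₂ = ((r * s ^ 2 * t : ℕ) * x : ℤ) * p / (D * C / p : ℕ) := by
    rw [hq₂]; push_cast; ring
  rw [hq₁', hq₂']
  exact gamma0Equivalent_div_mul_of_isCoprime _ (fun h => hpN (h ▸ dvd_zero p)) hp.ne_zero hpa

/-- for a prime `p ∣ D/C` with `p ∤ r`, the cusps `(r·s²·t·x)/(D·C)` and
`(r·s²·t·p·x)/((D·C)/p)` are `Γ₀((D·C)/p)`-equivalent. -/
theorem stmt_5 (D C : ℕ) (hD : 0 < D) (hsq : Squarefree D) (hC : C ∣ D) (hC0 : 0 < C)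
    (r s t : ℕ) (hr0 : 0 < r) (hs0 : 0 < s) (ht0 : 0 < t)
    (hr : r ∣ D / C) (hs : s ∣ C) (ht : t ∣ C) (hst : Nat.gcd s t = 1)
    (x : ℤ) (hx : Int.gcd x (D : ℤ) = 1)
    (p : ℕ) (hp : p.Prime) (hpD : p ∣ D / C) (hpr : ¬ p ∣ r)
    (q₁ q₂ : ℚ)
    (hq₁ : q₁ = (r * s ^ 2 * t : ℚ) * (x : ℚ) / (D * C : ℚ))
    (hq₂ : q₂ = (r * s ^ 2 * t * p : ℚ) * (x : ℚ) / ((D * C / p : ℕ) : ℚ)) :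
    ∃ α β δ ω : ℤ,
      α * ω - β * ((D * C / p : ℕ) : ℤ) * δ = 1 ∧
      (α : ℚ) * q₁ + (β : ℚ) = q₂ * (((D * C / p : ℕ) : ℚ) * (δ : ℚ) * q₁ + (ω : ℚ)) :=
  stmt_5_general D C hsq hC r s t hs ht x hx p hp hpD hpr q₁ q₂ hq₁ hq₂
end

section
/- Let D be a positive squarefree integer and C a positive divisor of D. Let r, s, t be positive integers with r ∣ D/C, s ∣ C, t ∣ C and gcd(s, t) = 1, and let x be an integer with gcd(x, D) = 1. Let p be a prime with p ∣ C and p ∤ s·t. Then the rational numbers (r·s²·t·x)/(D·C) and (r·s²·t·p²·x)/((D·C)/p²) are Γ₀((D·C)/p²)-equivalent; that is, there exist integers α, β, δ, ω with α·ω − β·((D·C)/p²)·δ = 1 such that α·q₁ + β = q₂·(((D·C)/p²)·δ·q₁ + ω), where q₁ = (r·s²·t·x)/(D·C) and q₂ = (r·s²·t·p²·x)/((D·C)/p²). -/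
/-! `a / (m u)` is moved to `a u / m` by a matrix of `Γ₀(m)` as soon as `u` is coprime to `a m`:
from a Bézout relation `w u + k a m = 1` one writes down the matrix explicitly. For the cusps of the
theorem, `m = D C / p²` and `u = p²`; squarefreeness of `D` makes `p` prime to `m`, to `r ∣ D / C`
and to `x`, and `p ∤ s t` by hypothesis. -/

def IsGammaZeroEquiv (n : ℕ) (q₁ q₂ : ℚ) : Prop :=
  ∃ α β δ ω : ℤ, α * ω - β * (n : ℤ) * δ = 1 ∧
    (α : ℚ) * q₁ + (β : ℚ) = q₂ * ((n : ℚ) * (δ : ℚ) * q₁ + (ω : ℚ))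

theorem isGammaZeroEquiv_div_mul_of_isCoprime {m : ℕ} (hm : m ≠ 0) {a u : ℤ} (hu : u ≠ 0)
    (hcop : IsCoprime u (a * m)) :
    IsGammaZeroEquiv m (a / (m * u)) (a * u / m) := by
  obtain ⟨w, k, hbez⟩ := hcop
  -- the matrix sends the column `(a, m u)` to `(u a, m)`
  refine ⟨u * (1 + k * a * m), -k * a ^ 2, k * m, w, ?_, ?_⟩
  · linear_combination (1 + k * a * (m : ℤ)) * hbez
  · have hbezQ : (w : ℚ) * u + k * (a * m) = 1 := by exact_mod_cast hbez
    have hmQ : (m : ℚ) ≠ 0 := by exact_mod_cast hm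
    have huQ : (u : ℚ) ≠ 0 := by exact_mod_cast hu
    push_cast
    field_simp
    linear_combination -(a : ℚ) * hbezQ

theorem Nat.not_dvd_div_of_squarefree {n d p : ℕ} (hn : Squarefree n) (hd : d ∣ n) (hpd : p ∣ d)
    (hp : ¬ IsUnit p) : ¬ p ∣ n / d := fun h ↦
  hp <| hn p <| by simpa [Nat.div_mul_cancel hd] using mul_dvd_mul h hpd

theorem Nat.Prime.not_dvd_mul_div_sq {D C p : ℕ} (hp : p.Prime) (hD : Squarefree D) (hC : C ∣ D)
    (hpC : p ∣ C) : ¬ p ∣ D * C / p ^ 2 := by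
  have hpD : p ∣ D := hpC.trans hC
  rw [sq, ← Nat.div_mul_div_comm hpD hpC, hp.dvd_mul, not_or]
  exact ⟨Nat.not_dvd_div_of_squarefree hD hpD dvd_rfl hp.not_isUnit,
    Nat.not_dvd_div_of_squarefree (hD.squarefree_of_dvd hC) hpC dvd_rfl hp.not_isUnit⟩

theorem Nat.Prime.isCoprime_sq_mul_mul_div_sq {D C r s t p : ℕ} {x : ℤ} (hp : p.Prime)
    (hD : Squarefree D) (hC : C ∣ D) (hpC : p ∣ C) (hr : r ∣ D / C) (hpst : ¬ p ∣ s * t)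
    (hx : Int.gcd x D = 1) :
    IsCoprime ((p : ℤ) ^ 2) (r * s ^ 2 * t * x * (D * C / p ^ 2 : ℕ)) := by
  have coprime_of_not_dvd {n : ℕ} (h : ¬ p ∣ n) : IsCoprime (p : ℤ) n :=
    (Nat.prime_iff_prime_int.mp hp).coprime_iff_not_dvd.mpr (by exact_mod_cast h)
  have hpr : IsCoprime (p : ℤ) r := coprime_of_not_dvd fun h ↦
    Nat.not_dvd_div_of_squarefree hD hC hpC hp.not_isUnit (h.trans hr)
  have hps : IsCoprime (p : ℤ) s := coprime_of_not_dvd fun h ↦ hpst (h.trans (dvd_mul_right s t))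
  have hpt : IsCoprime (p : ℤ) t := coprime_of_not_dvd fun h ↦ hpst (h.trans (dvd_mul_left t s))
  have hpx : IsCoprime (p : ℤ) x :=
    (Int.isCoprime_iff_gcd_eq_one.mpr hx).symm.of_isCoprime_of_dvd_left
      (Int.natCast_dvd_natCast.mpr (hpC.trans hC))
  have hpm : IsCoprime (p : ℤ) (D * C / p ^ 2 : ℕ) :=
    coprime_of_not_dvd (hp.not_dvd_mul_div_sq hD hC hpC)
  exact ((((hpr.mul_right hps.pow_right).mul_right hpt).mul_right hpx).mul_right hpm).pow_left

theorem stmt_6_general (D C : ℕ) (hsq : Squarefree D) (hC : C ∣ D)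
    (r s t : ℕ)
    (hr : r ∣ D / C)
    (x : ℤ) (hx : Int.gcd x (D : ℤ) = 1)
    (p : ℕ) (hp : p.Prime) (hpC : p ∣ C) (hpst : ¬ p ∣ s * t)
    (q₁ q₂ : ℚ)
    (hq₁ : q₁ = (r * s ^ 2 * t : ℚ) * (x : ℚ) / (D * C : ℚ))
    (hq₂ : q₂ = (r * s ^ 2 * t * p ^ 2 : ℚ) * (x : ℚ) / ((D * C / p ^ 2 : ℕ) : ℚ)) :
    ∃ α β δ ω : ℤ,
      α * ω - β * ((D * C / p ^ 2 : ℕ) : ℤ) * δ = 1 ∧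
      (α : ℚ) * q₁ + (β : ℚ) = q₂ * (((D * C / p ^ 2 : ℕ) : ℚ) * (δ : ℚ) * q₁ + (ω : ℚ)) := by
  set m := D * C / p ^ 2
  have hmp : (m : ℚ) * p ^ 2 = D * C := by
    exact_mod_cast Nat.div_mul_cancel (sq p ▸ mul_dvd_mul (hpC.trans hC) hpC)
  have hm : m ≠ 0 := by
    rintro hm0
    simp [hm0, hsq.ne_zero, (hsq.squarefree_of_dvd hC).ne_zero, eq_comm] at hmp
  have hcop := hp.isCoprime_sq_mul_mul_div_sq hsq hC hpC hr hpst hx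
  have hq₁' : q₁ = ((r * s ^ 2 * t * x : ℤ) : ℚ) / (m * ((p : ℤ) ^ 2 : ℤ)) := by
    rw [hq₁, ← hmp]; push_cast; ring
  have hq₂' : q₂ = ((r * s ^ 2 * t * x : ℤ) * (p : ℤ) ^ 2 : ℚ) / m := by
    rw [hq₂]; push_cast; ring
  rw [hq₁', hq₂']
  exact isGammaZeroEquiv_div_mul_of_isCoprime hm
    (pow_ne_zero 2 (by exact_mod_cast hp.ne_zero)) hcop

/-- for a prime `p ∣ C` with `p ∤ s·t`, the cusps `(r·s²·t·x)/(D·C)` and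
`(r·s²·t·p²·x)/((D·C)/p²)` are `Γ₀((D·C)/p²)`-equivalent. -/
theorem stmt_6 (D C : ℕ) (hD : 0 < D) (hsq : Squarefree D) (hC : C ∣ D) (hC0 : 0 < C)
    (r s t : ℕ) (hr0 : 0 < r) (hs0 : 0 < s) (ht0 : 0 < t)
    (hr : r ∣ D / C) (hs : s ∣ C) (ht : t ∣ C) (hst : Nat.gcd s t = 1)
    (x : ℤ) (hx : Int.gcd x (D : ℤ) = 1)
    (p : ℕ) (hp : p.Prime) (hpC : p ∣ C) (hpst : ¬ p ∣ s * t)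
    (q₁ q₂ : ℚ)
    (hq₁ : q₁ = (r * s ^ 2 * t : ℚ) * (x : ℚ) / (D * C : ℚ))
    (hq₂ : q₂ = (r * s ^ 2 * t * p ^ 2 : ℚ) * (x : ℚ) / ((D * C / p ^ 2 : ℕ) : ℚ)) :
    ∃ α β δ ω : ℤ,
      α * ω - β * ((D * C / p ^ 2 : ℕ) : ℤ) * δ = 1 ∧
      (α : ℚ) * q₁ + (β : ℚ) = q₂ * (((D * C / p ^ 2 : ℕ) : ℚ) * (δ : ℚ) * q₁ + (ω : ℚ)) :=
  stmt_6_general D C hsq hC r s t hr x hx p hp hpC hpst q₁ q₂ hq₁ hq₂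
end

section
/- Let D be a positive squarefree integer and C a positive divisor of D. Let r, s, t be positive integers with r ∣ D/C, s ∣ C, t ∣ C and gcd(s, t) = 1, and let x be an integer with gcd(x, D) = 1. Let K be a positive divisor of t and α a positive divisor of K. Then the rational numbers (r·s²·t·α·x)/(D·C) and (r·s²·(t/K)·((K/α)·x))/((D·C)/K²) are Γ₀((D·C)/K²)-equivalent. -/
/-!
After writing `D = C·(D/C)`, `C = t·(C/t)`, `t = K·(t/K)`, `K = α·β` and `C/t = s·C₂`, both cusps
simplify: with `N = D·C/K² = m·e`, `m = ((D/C)/r)·(t/K)·C₂²` and `e = r·s²·(t/K)`, the first is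
`x/(β·m)` and the second is `β·x/m`. Squarefreeness of `D` makes `β` coprime to `N`, and `β` is coprime
to `x`, so a Bézout relation `c₀·(e·m·x) + d·β = 1` yields an explicit matrix of `Γ₀(N)` mapping one
cusp to the other.
-/

def Gamma0Equiv (n : ℕ) (q₁ q₂ : ℚ) : Prop :=
  ∃ a b c d : ℤ, a * d - b * (n : ℤ) * c = 1 ∧ (a : ℚ) * q₁ + b = q₂ * ((n : ℚ) * c * q₁ + d)

theorem gamma0Equiv_div_mul_div_of_isCoprime {m e β : ℕ} {x : ℤ} (hm : m ≠ 0) (hβ : β ≠ 0)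
    (hcop : IsCoprime (e * m * x) β) :
    Gamma0Equiv (m * e) (x / (β * m)) (β * x / m) := by
  obtain ⟨c₀, d, hbez⟩ := hcop
  -- With `y = e·m·c₀·x` and `β·d = 1 - y`, the determinant is `(1 - y)(1 + y) + y² = 1`, and the
  -- matrix sends the column `(x, β·m)` to `(β·x, m)`.
  refine ⟨β * (1 + e * m * c₀ * x), -(e * c₀ * x ^ 2), m * c₀, d, ?_, ?_⟩
  · push_cast
    linear_combination (1 + e * m * c₀ * x) * hbez
  · have hbezQ : (c₀ : ℚ) * (e * m * x) + d * β = 1 := by exact_mod_cast hbez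
    push_cast
    field_simp
    linear_combination -(x : ℚ) * hbezQ

theorem coprime_of_dvd_pow_of_squarefree_mul {a b n k : ℕ} (hsq : Squarefree (a * b))
    (hn : n ∣ b ^ k) : Nat.Coprime n a :=
  (((Nat.squarefree_mul_iff.mp hsq).1.pow_right k).coprime_dvd_right hn).symm

theorem stmt_8_general (D C : ℕ) (hsq : Squarefree D) (hC : C ∣ D)
    (r s t : ℕ)
    (hr : r ∣ D / C) (hs : s ∣ C) (ht : t ∣ C) (hst : Nat.gcd s t = 1)
    (x : ℤ) (hx : Int.gcd x (D : ℤ) = 1)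
    (K : ℕ) (hK : K ∣ t)
    (α : ℕ) (hα : α ∣ K)
    (q₁ q₂ : ℚ)
    (hq₁ : q₁ = (r * s ^ 2 * t * α : ℚ) * (x : ℚ) / (D * C : ℚ))
    (hq₂ : q₂ = (r * s ^ 2 * (t / K : ℕ) : ℚ) * (((K / α : ℕ) : ℚ) * (x : ℚ)) /
        ((D * C / K ^ 2 : ℕ) : ℚ)) :
    ∃ a b c d : ℤ,
      a * d - b * ((D * C / K ^ 2 : ℕ) : ℤ) * c = 1 ∧
      (a : ℚ) * q₁ + (b : ℚ) =
        q₂ * (((D * C / K ^ 2 : ℕ) : ℚ) * (c : ℚ) * q₁ + (d : ℚ)) := by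
  obtain ⟨D₁, rfl⟩ := hC
  obtain ⟨C₁, rfl⟩ := ht
  obtain ⟨t', rfl⟩ := hK
  obtain ⟨β, rfl⟩ := hα
  obtain ⟨C₂, rfl⟩ : s ∣ C₁ := Nat.Coprime.dvd_of_dvd_mul_left hst hs
  obtain ⟨⟨⟨⟨hα0, hβ0⟩, ht'0⟩, hs0, hC₂0⟩, hD₁0⟩ := by
    simpa only [mul_ne_zero_iff] using hsq.ne_zero
  rw [Nat.mul_div_cancel_left _ (by positivity)] at hr
  obtain ⟨R, rfl⟩ := hr
  obtain ⟨hr0, hR0⟩ := mul_ne_zero_iff.mp hD₁0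
  set m := R * t' * C₂ ^ 2
  set e := r * s ^ 2 * t'
  have hN : α * β * t' * (s * C₂) * (r * R) * (α * β * t' * (s * C₂)) / (α * β) ^ 2 = m * e :=
    Nat.div_eq_of_eq_mul_left (by positivity) (by ring)
  rw [Nat.mul_div_cancel_left _ (by positivity), Nat.mul_div_cancel_left _ (by positivity), hN]
    at hq₂
  rw [hN]
  have hm0 : m ≠ 0 := by positivity
  have hq₁' : q₁ = x / (β * m) := by
    rw [hq₁, div_eq_div_iff (by positivity) (by positivity)]
    simp only [m]
    push_cast
    ring
  have hq₂' : q₂ = β * x / m := by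
    rw [hq₂, div_eq_div_iff (by positivity) (by positivity)]
    simp only [m, e]
    push_cast
    ring
  have hβN : Nat.Coprime (e * m) β :=
    coprime_of_dvd_pow_of_squarefree_mul (b := α * t' * (s * C₂) * (r * R)) (k := 2)
      (by convert hsq using 1; ring) ⟨α ^ 2 * r * R, by ring⟩
  have hxβ : IsCoprime x β :=
    (Int.isCoprime_iff_gcd_eq_one.mpr hx).of_isCoprime_of_dvd_right
      (Int.natCast_dvd_natCast.mpr ⟨α * t' * (s * C₂) * (r * R), by ring⟩)
  rw [hq₁', hq₂']
  exact gamma0Equiv_div_mul_div_of_isCoprime hm0 hβ0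
    ((Nat.isCoprime_iff_coprime.mpr hβN).mul_left hxβ)

/-- for `K` a positive divisor of `t` and `α` a positive divisor of `K`, the
cusps `(r·s²·t·α·x)/(D·C)` and `(r·s²·(t/K)·((K/α)·x))/((D·C)/K²)` are
`Γ₀((D·C)/K²)`-equivalent. -/
theorem stmt_8 (D C : ℕ) (hD : 0 < D) (hsq : Squarefree D) (hC : C ∣ D) (hC0 : 0 < C)
    (r s t : ℕ) (hr0 : 0 < r) (hs0 : 0 < s) (ht0 : 0 < t)
    (hr : r ∣ D / C) (hs : s ∣ C) (ht : t ∣ C) (hst : Nat.gcd s t = 1)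
    (x : ℤ) (hx : Int.gcd x (D : ℤ) = 1)
    (K : ℕ) (hK0 : 0 < K) (hK : K ∣ t)
    (α : ℕ) (hα0 : 0 < α) (hα : α ∣ K)
    (q₁ q₂ : ℚ)
    (hq₁ : q₁ = (r * s ^ 2 * t * α : ℚ) * (x : ℚ) / (D * C : ℚ))
    (hq₂ : q₂ = (r * s ^ 2 * (t / K : ℕ) : ℚ) * (((K / α : ℕ) : ℚ) * (x : ℚ)) /
        ((D * C / K ^ 2 : ℕ) : ℚ)) :
    ∃ a b c d : ℤ,
      a * d - b * ((D * C / K ^ 2 : ℕ) : ℤ) * c = 1 ∧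
      (a : ℚ) * q₁ + (b : ℚ) =
        q₂ * (((D * C / K ^ 2 : ℕ) : ℚ) * (c : ℚ) * q₁ + (d : ℚ)) :=
  stmt_8_general D C hsq hC r s t hr hs ht hst x hx K hK α hα q₁ q₂ hq₁ hq₂
end

section
/- Let D be a positive squarefree integer, C a positive divisor of D, and M, L positive divisors of D with D ∣ M·L and M·L ∣ D·C. Let f be a positive divisor of gcd(M, L), let χ be a primitive quadratic Dirichlet character of conductor f, and let η be a Dirichlet character of modulus m with gcd(m, D) = 1. Define a : ℕ → ℂ by a(n) = 0 if gcd(n, gcd(M, L)/f) > 1, and otherwise a(n) = χ(n)·η(n)·(∏_{p ∣ D/M} p^{v_p(n)})·(Σ_{d ∣ n, gcd(d, D/f) = 1} d), where the product is over the primes p dividing D/M. Then for every complex number s with Re(s) > 2, the Dirichlet series Σ_{n≥1} a(n)·n^{−s} converges and equals ∏_{p ∣ M/f} (1 − χ(p)η(p)·p^{1−s}) · ∏_{p ∣ L/f} (1 − χ(p)η(p)·p^{−s}) · (Σ_{n≥1} χ(n)η(n)·n^{1−s}) · (Σ_{n≥1} χ(n)η(n)·n^{−s}), where the finite products are over the primes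 dividing M/f and L/f respectively. -/
/-!
Put `ν = χη`, which is completely multiplicative and bounded by `1`, and `A = M/f`, `B = L/f`.
Then `a(n) = ν(n) · ∑ d`, the sum over the divisors `d ∣ n` with `(d, A) = 1` and `(n/d, B) = 1`:
if `(n, gcd(A, B)) > 1` there is no such `d`, and otherwise they are exactly the products of the
`B`-part `∏_{p ∣ D/M} p^{v_p(n)}` of `n` with the divisors of `n` prime to `D/f`.
That divisor sum is the Dirichlet convolution of `n ↦ [(n, A) = 1] ν(n) n` and
`n ↦ [(n, B) = 1] ν(n)`; restricting a completely multiplicative `w` to `(n, N) = 1` is convolving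
it with `d ↦ [d ∣ N] μ(d) w(d)`, whose L-series is the finite Euler factor
`∏_{p ∣ N} (1 - w(p) p^{-s})` since `N` is squarefree.
-/

open scoped ArithmeticFunction.Moebius

namespace Nat

lemma primeFactors_div_of_dvd {m n : ℕ} (hm : Squarefree m) (hnm : n ∣ m) :
    (m / n).primeFactors = m.primeFactors \ n.primeFactors := by
  rw [← primeFactors_div_gcd hm (ne_zero_of_dvd_ne_zero hm.ne_zero hnm), gcd_eq_right hnm]

lemma primeFactors_eq_union_of_dvd_mul {D M L : ℕ} (hD : D ≠ 0) (hM : M ∣ D) (hL : L ∣ D)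
    (hDML : D ∣ M * L) : D.primeFactors = M.primeFactors ∪ L.primeFactors := by
  have hM0 := ne_zero_of_dvd_ne_zero hD hM
  have hL0 := ne_zero_of_dvd_ne_zero hD hL
  refine subset_antisymm ?_
    (Finset.union_subset (primeFactors_mono hM hD) (primeFactors_mono hL hD))
  rw [← primeFactors_mul hM0 hL0]
  exact primeFactors_mono hDML (mul_ne_zero hM0 hL0)

lemma Coprime.of_primeFactors_subset {e X Y : ℕ} (h : Coprime e X) (hY : Y ≠ 0)
    (hYX : Y.primeFactors ⊆ X.primeFactors) : Coprime e Y :=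
  coprime_of_dvd fun _ hp hpe hpY => not_coprime_of_dvd_of_dvd hp.one_lt hpe
    (dvd_of_mem_primeFactors (hYX (mem_primeFactors.mpr ⟨hp, hpY, hY⟩))) h

lemma filter_divisors_dvd_eq_divisors_gcd {n : ℕ} (hn : n ≠ 0) (N : ℕ) :
    n.divisors.filter (· ∣ N) = (gcd n N).divisors := by
  ext d
  simp [dvd_gcd_iff, hn]

lemma filter_divisors_coprime_eq_empty {n A B : ℕ} (h : ¬Coprime n (gcd A B)) :
    n.divisors.filter (fun d => Coprime d A ∧ Coprime (n / d) B) = ∅ := by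
  obtain ⟨p, hp, hpn, hpAB⟩ := Prime.not_coprime_iff_dvd.mp h
  refine Finset.filter_eq_empty_iff.mpr fun d hd ⟨hdA, hdB⟩ => ?_
  rw [← Nat.mul_div_cancel' (mem_divisors.mp hd).1] at hpn
  rcases hp.dvd_mul.mp hpn with hpd | hpd
  · exact not_coprime_of_dvd_of_dvd hp.one_lt hpd (hpAB.trans (gcd_dvd_left A B)) hdA
  · exact not_coprime_of_dvd_of_dvd hp.one_lt hpd (hpAB.trans (gcd_dvd_right A B)) hdB

theorem sum_filter_divisors_coprime_eq_mul {n A B K : ℕ} (hKn : K ∣ n) (hKA : Coprime K A)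
    (hKB : K.primeFactors ⊆ B.primeFactors) (hnK : Coprime (n / K) B) :
    ∑ d ∈ n.divisors.filter (fun d => Coprime d A ∧ Coprime (n / d) B), d
      = K * ∑ e ∈ n.divisors.filter (fun e => Coprime e (A * B)), e := by
  rcases eq_or_ne n 0 with rfl | hn
  · simp
  have hK0 : K ≠ 0 := ne_zero_of_dvd_ne_zero hn hKn
  have hnK0 : n / K ≠ 0 := (div_ne_zero_iff_of_dvd hKn).mpr ⟨hn, hK0⟩
  have hright : n.divisors.filter (fun e => Coprime e (A * B))
      = (n / K).divisors.filter (Coprime · A) := by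
    ext e
    simp only [Finset.mem_filter, mem_divisors, coprime_mul_iff_right]
    constructor
    · rintro ⟨⟨hen, -⟩, heA, heB⟩
      refine ⟨⟨(heB.of_primeFactors_subset hK0 hKB).dvd_of_dvd_mul_left ?_, hnK0⟩, heA⟩
      rwa [Nat.mul_div_cancel' hKn]
    · rintro ⟨⟨hen, -⟩, heA⟩
      exact ⟨⟨hen.trans (div_dvd_of_dvd hKn), hn⟩, heA, hnK.coprime_dvd_left hen⟩
  have hleft : n.divisors.filter (fun d => Coprime d A ∧ Coprime (n / d) B)
      = ((n / K).divisors.filter (Coprime · A)).image (K * ·) := by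
    ext d
    simp only [Finset.mem_filter, Finset.mem_image, mem_divisors]
    constructor
    · rintro ⟨⟨hdn, -⟩, hdA, hdB⟩
      have hKd : K ∣ d := (hdB.of_primeFactors_subset hK0 hKB).symm.dvd_of_dvd_mul_right
        (by rwa [Nat.mul_div_cancel' hdn])
      exact ⟨d / K, ⟨⟨div_dvd_div hKd hdn, hnK0⟩, hdA.coprime_dvd_left (div_dvd_of_dvd hKd)⟩,
        Nat.mul_div_cancel' hKd⟩
    · rintro ⟨e, ⟨⟨hen, -⟩, heA⟩, rfl⟩
      refine ⟨⟨?_, hn⟩, hKA.mul_left heA, ?_⟩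
      · rw [← Nat.mul_div_cancel' hKn]
        exact mul_dvd_mul_left K hen
      · rw [← Nat.div_div_eq_div_mul]
        exact hnK.coprime_dvd_left (div_dvd_of_dvd hen)
  rw [hleft, hright, Finset.sum_image fun x _ y _ h => Nat.eq_of_mul_eq_mul_left
    (pos_of_ne_zero hK0) h, Finset.mul_sum]

lemma prod_pow_factorization_dvd {S : Finset ℕ} (hS : ∀ p ∈ S, p.Prime) (n : ℕ) :
    ∏ p ∈ S, p ^ n.factorization p ∣ n := by
  refine Finset.prod_dvd_of_isRelPrime (fun p hp q hq hpq => ?_) fun p _ => ordProj_dvd n p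
  exact coprime_iff_isRelPrime.mp (coprime_pow_primes _ _ (hS p hp) (hS q hq) hpq)

lemma primeFactors_prod_pow_subset {S : Finset ℕ} (hS : ∀ p ∈ S, p.Prime) (k : ℕ → ℕ) :
    (∏ p ∈ S, p ^ k p).primeFactors ⊆ S := by
  intro q hq
  have hq' := prime_of_mem_primeFactors hq
  obtain ⟨p, hpS, hqp⟩ := (hq'.prime.dvd_finsetProd_iff _).mp (dvd_of_mem_primeFactors hq)
  rwa [(prime_dvd_prime_iff_eq hq' (hS p hpS)).mp (hq'.dvd_of_dvd_pow hqp)]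

lemma coprime_div_prod_pow_factorization {n B : ℕ} {S : Finset ℕ} (hn : n ≠ 0)
    (hS : ∀ p ∈ S, p.Prime) (hBS : ∀ p, p.Prime → p ∣ n → p ∣ B → p ∈ S) :
    Coprime (n / ∏ p ∈ S, p ^ n.factorization p) B := by
  have hKn := prod_pow_factorization_dvd hS n
  refine coprime_of_dvd fun p hp hpn hpB => pow_succ_factorization_not_dvd hn hp ?_
  have hpS := hBS p hp (hpn.trans (div_dvd_of_dvd hKn)) hpB
  calc p ^ (n.factorization p + 1) = p ^ n.factorization p * p := pow_succ _ _
    _ ∣ (∏ q ∈ S, q ^ n.factorization q) * (n / ∏ q ∈ S, q ^ n.factorization q) :=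
      mul_dvd_mul (Finset.dvd_prod_of_mem _ hpS) hpn
    _ = n := Nat.mul_div_cancel' hKn

theorem sum_filter_divisors_coprime_eq_prod_mul {n A B : ℕ} (hA : A ≠ 0) (hB : B ≠ 0)
    (hn : Coprime n (gcd A B)) :
    ∑ d ∈ n.divisors.filter (fun d => Coprime d A ∧ Coprime (n / d) B), d
      = (∏ p ∈ B.primeFactors \ A.primeFactors, p ^ n.factorization p) *
        ∑ e ∈ n.divisors.filter (fun e => Coprime e (A * B)), e := by
  rcases eq_or_ne n 0 with rfl | hn0
  · simp
  have hS : ∀ p ∈ B.primeFactors \ A.primeFactors, p.Prime :=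
    fun p hp => prime_of_mem_primeFactors (Finset.mem_sdiff.mp hp).1
  refine sum_filter_divisors_coprime_eq_mul (prod_pow_factorization_dvd hS n) ?_
    ((primeFactors_prod_pow_subset hS _).trans Finset.sdiff_subset)
    (coprime_div_prod_pow_factorization hn0 hS fun p hp hpn hpB => ?_)
  · refine Coprime.prod_left fun p hp => ((hS p hp).coprime_iff_not_dvd.mpr ?_).pow_left _
    exact fun hpA => (Finset.mem_sdiff.mp hp).2 (mem_primeFactors.mpr ⟨hS p hp, hpA, hA⟩)
  · refine Finset.mem_sdiff.mpr ⟨mem_primeFactors.mpr ⟨hp, hpB, hB⟩, fun hpA => ?_⟩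
    exact not_coprime_of_dvd_of_dvd hp.one_lt hpn
      (dvd_gcd (dvd_of_mem_primeFactors hpA) hpB) hn

end Nat

open LSeries

lemma ArithmeticFunction.sum_divisors_moebius (n : ℕ) :
    ∑ d ∈ n.divisors, (μ d : ℂ) = if n = 1 then 1 else 0 := by
  have h := congrArg (fun k : ℤ => (k : ℂ))
    (congrFun (congrArg DFunLike.coe ArithmeticFunction.moebius_mul_coe_zeta) n)
  simp only [ArithmeticFunction.coe_mul_zeta_apply, ArithmeticFunction.one_apply] at h
  push_cast at h
  exact h

lemma LSeries.term_mul_natCast (f : ℕ → ℂ) (s : ℂ) :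
    term (fun n => f n * n) s = term f (s - 1) := by
  ext n
  rcases eq_or_ne n 0 with rfl | hn
  · simp
  rw [term_of_ne_zero hn, term_of_ne_zero hn, Complex.cpow_sub _ _ (Nat.cast_ne_zero.mpr hn),
    Complex.cpow_one, div_div_eq_mul_div]

lemma LSeriesHasSum_moebius_dvd (w : ℕ →* ℂ) {N : ℕ} (hN : Squarefree N) (s : ℂ) :
    LSeriesHasSum (fun d => if d ∣ N then μ d * w d else 0) s
      (∏ p ∈ N.primeFactors, (1 - w p / p ^ s)) := by
  let F : ArithmeticFunction ℂ := ⟨term w s, term_zero w s⟩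
  have hF : F.IsMultiplicative := by
    refine ArithmeticFunction.IsMultiplicative.iff_ne_zero.mpr
      ⟨by simp [F], fun {m n} hm hn _ => ?_⟩
    show term w s (m * n) = term w s m * term w s n
    rw [term_of_ne_zero hm, term_of_ne_zero hn, term_of_ne_zero (mul_ne_zero hm hn), map_mul,
      Nat.cast_mul, Complex.natCast_mul_natCast_cpow, mul_div_mul_comm]
  have hsupp : ∀ d ∉ N.divisors,
      term (fun d => if d ∣ N then (μ d : ℂ) * w d else 0) s d = 0 := by
    intro d hd
    rcases eq_or_ne d 0 with rfl | hd0
    · exact term_zero _ s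
    rw [term_of_ne_zero hd0, if_neg fun h => hd (Nat.mem_divisors.mpr ⟨h, hN.ne_zero⟩), zero_div]
  have hsum : ∑ d ∈ N.divisors, term (fun d => if d ∣ N then (μ d : ℂ) * w d else 0) s d
      = ∏ p ∈ N.primeFactors, (1 - w p / p ^ s) := by
    rw [Finset.prod_congr rfl fun p hp => by
        rw [← term_of_ne_zero (Nat.prime_of_mem_primeFactors hp).ne_zero],
      show ∏ p ∈ N.primeFactors, (1 - term w s p) = ∏ p ∈ N.primeFactors, (1 - F p) from rfl,
      hF.prodPrimeFactors_one_sub_of_squarefree F hN]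
    refine Finset.sum_congr rfl fun d hd => ?_
    have hd0 := Nat.ne_of_gt (Nat.pos_of_mem_divisors hd)
    rw [term_of_ne_zero hd0, if_pos (Nat.mem_divisors.mp hd).1, mul_div_assoc,
      ← term_of_ne_zero hd0]
    rfl
  exact hsum ▸ hasSum_sum_of_ne_finset_zero hsupp

lemma convolution_moebius_dvd_apply (w : ℕ →* ℂ) (N : ℕ) {n : ℕ} (hn : n ≠ 0) :
    convolution (fun d => if d ∣ N then μ d * w d else 0) w n
      = if Nat.Coprime n N then w n else 0 := by
  have hterm : ∀ d ∈ n.divisors,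
      (if d ∣ N then (μ d : ℂ) * w d else 0) * w (n / d) = if d ∣ N then μ d * w n else 0 := by
    intro d hd
    split_ifs
    · rw [mul_assoc, ← map_mul, Nat.mul_div_cancel' (Nat.mem_divisors.mp hd).1]
    · rw [zero_mul]
  rw [convolution_def]
  dsimp only
  rw [Nat.sum_divisorsAntidiagonal fun d e => (if d ∣ N then (μ d : ℂ) * w d else 0) * w e,
    Finset.sum_congr rfl hterm, ← Finset.sum_filter, ← Finset.sum_mul,
    Nat.filter_divisors_dvd_eq_divisors_gcd hn, ArithmeticFunction.sum_divisors_moebius]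
  split_ifs <;> simp_all

lemma convolution_coprime_apply (ν : ℕ →* ℂ) (A B n : ℕ) :
    convolution (fun n => if Nat.Coprime n A then ν n * n else 0)
      (fun n => if Nat.Coprime n B then ν n else 0) n
      = ν n * ∑ d ∈ n.divisors.filter (fun d => Nat.Coprime d A ∧ Nat.Coprime (n / d) B),
          (d : ℂ) := by
  have hterm : ∀ d ∈ n.divisors,
      (if Nat.Coprime d A then ν d * d else 0) *
          (if Nat.Coprime (n / d) B then ν (n / d) else 0)
        = if Nat.Coprime d A ∧ Nat.Coprime (n / d) B then ν n * d else 0 := by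
    intro d hd
    have hν : ν d * ν (n / d) = ν n := by
      rw [← map_mul, Nat.mul_div_cancel' (Nat.mem_divisors.mp hd).1]
    split_ifs <;> simp_all [← hν]
    ring
  rw [convolution_def]
  dsimp only
  rw [Nat.sum_divisorsAntidiagonal fun d e =>
      (if Nat.Coprime d A then ν d * d else 0) * (if Nat.Coprime e B then ν e else 0),
    Finset.sum_congr rfl hterm, ← Finset.sum_filter, Finset.mul_sum]

theorem LSeriesHasSum_mul_sum_divisors_coprime (ν : ℕ →* ℂ) (hν : ∀ n, ‖ν n‖ ≤ 1) {A B : ℕ}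
    (hA : Squarefree A) (hB : Squarefree B) {s : ℂ} (hs : 2 < s.re) :
    LSeriesHasSum (fun n => ν n *
        ∑ d ∈ n.divisors.filter (fun d => Nat.Coprime d A ∧ Nat.Coprime (n / d) B), (d : ℂ)) s
      ((∏ p ∈ A.primeFactors, (1 - ν p * (p : ℂ) ^ (1 - s))) *
        (∏ p ∈ B.primeFactors, (1 - ν p * (p : ℂ) ^ (-s))) * LSeries ν (s - 1) * LSeries ν s) := by
  let ν₁ : ℕ →* ℂ := ν * (Nat.castRingHom ℂ : ℕ →* ℂ)
  have hν₁ : LSeriesHasSum ν₁ s (LSeries ν (s - 1)) := by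
    have : LSeriesSummable ν (s - 1) :=
      LSeriesSummable_of_bounded_of_one_lt_re (fun n _ => hν n) (by simp; linarith)
    show HasSum (term (fun n => ν n * n) s) _
    rw [term_mul_natCast]
    exact this.LSeriesHasSum
  have hν₀ : LSeriesHasSum ν s (LSeries ν s) :=
    (LSeriesSummable_of_bounded_of_one_lt_re (fun n _ => hν n) (by linarith)).LSeriesHasSum
  have h := ((LSeriesHasSum_moebius_dvd ν₁ hA s).convolution hν₁).convolution
    ((LSeriesHasSum_moebius_dvd ν hB s).convolution hν₀)
  rw [convolution_congr (fun hn => convolution_moebius_dvd_apply ν₁ A hn)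
    (fun hn => convolution_moebius_dvd_apply ν B hn)] at h
  convert h using 1
  · ext n
    exact (convolution_coprime_apply ν A B n).symm
  · have hpA : ∀ p ∈ A.primeFactors, 1 - ν₁ p / (p : ℂ) ^ s = 1 - ν p * (p : ℂ) ^ (1 - s) :=
      fun p hp => by
        rw [Complex.cpow_sub _ _ (Nat.cast_ne_zero.mpr (Nat.prime_of_mem_primeFactors hp).ne_zero),
          Complex.cpow_one, ← mul_div_assoc]
        rfl
    have hpB : ∀ p ∈ B.primeFactors, 1 - ν p / (p : ℂ) ^ s = 1 - ν p * (p : ℂ) ^ (-s) :=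
      fun p _ => by rw [Complex.cpow_neg, div_eq_mul_inv]
    rw [Finset.prod_congr rfl hpA, Finset.prod_congr rfl hpB]
    ring

section SquarefreeLevel

variable {D M L f : ℕ}

lemma primeFactors_div_eq_primeFactors_mul (hsq : Squarefree D) (hM : M ∣ D) (hL : L ∣ D)
    (hDML : D ∣ M * L) (hfM : f ∣ M) (hfL : f ∣ L) :
    (D / f).primeFactors = (M / f * (L / f)).primeFactors := by
  have hsqM := hsq.squarefree_of_dvd hM
  have hsqL := hsq.squarefree_of_dvd hL
  rw [Nat.primeFactors_mul (hsqM.squarefree_of_dvd (Nat.div_dvd_of_dvd hfM)).ne_zero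
      (hsqL.squarefree_of_dvd (Nat.div_dvd_of_dvd hfL)).ne_zero,
    Nat.primeFactors_div_of_dvd hsq (hfM.trans hM), Nat.primeFactors_div_of_dvd hsqM hfM,
    Nat.primeFactors_div_of_dvd hsqL hfL,
    Nat.primeFactors_eq_union_of_dvd_mul hsq.ne_zero hM hL hDML, Finset.union_sdiff_distrib]

lemma primeFactors_div_eq_sdiff (hsq : Squarefree D) (hM : M ∣ D) (hL : L ∣ D)
    (hDML : D ∣ M * L) (hfM : f ∣ M) (hfL : f ∣ L) :
    (D / M).primeFactors = (L / f).primeFactors \ (M / f).primeFactors := by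
  have hsqM := hsq.squarefree_of_dvd hM
  have hfM' := Nat.primeFactors_mono hfM hsqM.ne_zero
  rw [Nat.primeFactors_div_of_dvd hsq hM, Nat.primeFactors_div_of_dvd hsqM hfM,
    Nat.primeFactors_div_of_dvd (hsq.squarefree_of_dvd hL) hfL,
    Nat.primeFactors_eq_union_of_dvd_mul hsq.ne_zero hM hL hDML]
  ext p
  have := @hfM' p
  simp only [Finset.mem_sdiff, Finset.mem_union]
  tauto

lemma mul_sum_filter_divisors_coprime_div_eq_ite (hsq : Squarefree D) (hM : M ∣ D) (hL : L ∣ D)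
    (hDML : D ∣ M * L) (hf : f ∣ Nat.gcd M L) {n : ℕ} (hn : n ≠ 0) (c : ℂ) :
    c * ∑ d ∈ n.divisors.filter (fun d => Nat.Coprime d (M / f) ∧ Nat.Coprime (n / d) (L / f)),
        (d : ℂ)
      = if 1 < Nat.gcd n (Nat.gcd M L / f) then 0
        else c * (∏ p ∈ (D / M).primeFactors, (p : ℂ) ^ (n.factorization p)) *
          ∑ d ∈ n.divisors.filter (fun d => Nat.gcd d (D / f) = 1), (d : ℂ) := by
  have hfM : f ∣ M := hf.trans (Nat.gcd_dvd_left M L)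
  have hfL : f ∣ L := hf.trans (Nat.gcd_dvd_right M L)
  have hA0 := ((hsq.squarefree_of_dvd hM).squarefree_of_dvd (Nat.div_dvd_of_dvd hfM)).ne_zero
  have hB0 := ((hsq.squarefree_of_dvd hL).squarefree_of_dvd (Nat.div_dvd_of_dvd hfL)).ne_zero
  have hDf0 := (hsq.squarefree_of_dvd (Nat.div_dvd_of_dvd (hfM.trans hM))).ne_zero
  have hpf := primeFactors_div_eq_primeFactors_mul hsq hM hL hDML hfM hfL
  have hcop : ∀ e, Nat.gcd e (D / f) = 1 ↔ Nat.Coprime e (M / f * (L / f)) := fun e =>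
    ⟨fun h => Nat.Coprime.of_primeFactors_subset h (mul_ne_zero hA0 hB0) hpf.ge,
      fun h => h.of_primeFactors_subset hDf0 hpf.le⟩
  rw [← Nat.gcd_div hfM hfL, primeFactors_div_eq_sdiff hsq hM hL hDML hfM hfL,
    Finset.filter_congr fun e _ => hcop e]
  by_cases hn' : Nat.Coprime n (Nat.gcd (M / f) (L / f))
  · rw [if_neg (by rw [hn']; omega), ← Nat.cast_sum,
      Nat.sum_filter_divisors_coprime_eq_prod_mul hA0 hB0 hn']
    push_cast
    ring
  · rw [if_pos, Nat.filter_divisors_coprime_eq_empty hn', Finset.sum_empty, mul_zero]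
    exact Nat.one_lt_iff_ne_zero_and_ne_one.mpr ⟨Nat.gcd_ne_zero_left hn, hn'⟩

end SquarefreeLevel

theorem stmt_12_general (D M L : ℕ) (hsq : Squarefree D) (hM : M ∣ D) (hL : L ∣ D)
    (hDML : D ∣ M * L) (f : ℕ) (hf : f ∣ Nat.gcd M L)
    (χ : DirichletCharacter ℂ f) (m : ℕ) (η : DirichletCharacter ℂ m) (a : ℕ → ℂ)
    (ha : ∀ n : ℕ, a n =
      if 1 < Nat.gcd n (Nat.gcd M L / f) then 0
      else χ (n : ZMod f) * η (n : ZMod m) *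
        (∏ p ∈ (D / M).primeFactors, (p : ℂ) ^ (n.factorization p)) *
        (∑ d ∈ n.divisors.filter (fun d => Nat.gcd d (D / f) = 1), (d : ℂ))) :
    ∀ s : ℂ, 2 < s.re →
      LSeriesHasSum a s
        ((∏ p ∈ (M / f).primeFactors,
            (1 - χ (p : ZMod f) * η (p : ZMod m) * (p : ℂ) ^ ((1 : ℂ) - s))) *
         (∏ p ∈ (L / f).primeFactors,
            (1 - χ (p : ZMod f) * η (p : ZMod m) * (p : ℂ) ^ (-s))) *
         LSeries (fun n : ℕ => χ (n : ZMod f) * η (n : ZMod m)) (s - 1) *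
         LSeries (fun n : ℕ => χ (n : ZMod f) * η (n : ZMod m)) s) := by
  intro s hs
  let ν : ℕ →* ℂ :=
    { toFun n := χ n * η n
      map_one' := by simp
      map_mul' x y := by push_cast; simp only [map_mul]; ring }
  have hν : ∀ n, ‖ν n‖ ≤ 1 := fun n => by
    simpa [ν] using mul_le_one₀ (χ.norm_le_one _) (norm_nonneg _) (η.norm_le_one _)
  have hsqA := (hsq.squarefree_of_dvd hM).squarefree_of_dvd
    (Nat.div_dvd_of_dvd (hf.trans (Nat.gcd_dvd_left M L)))
  have hsqB := (hsq.squarefree_of_dvd hL).squarefree_of_dvd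
    (Nat.div_dvd_of_dvd (hf.trans (Nat.gcd_dvd_right M L)))
  refine (LSeriesHasSum_congr s _ fun {n} hn => ?_).mpr
    (LSeriesHasSum_mul_sum_divisors_coprime ν hν hsqA hsqB hs)
  rw [ha n]
  exact (mul_sum_filter_divisors_coprime_div_eq_ite hsq hM hL hDML hf hn _).symm

/-- the Dirichlet series of the twisted Eisenstein coefficients
`a(n) = χ(n)η(n)·(∏_{p ∣ D/M} p^{v_p(n)})·σ^{(D/f)}(n)` (vanishing when
`gcd(n, gcd(M,L)/f) > 1`) converges for `Re(s) > 2` to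
`∏_{p ∣ M/f}(1 − χη(p)p^{1−s}) · ∏_{p ∣ L/f}(1 − χη(p)p^{−s}) · L(χη, s−1) · L(χη, s)`. -/
theorem stmt_12 (D C M L : ℕ) (hD : 0 < D) (hsq : Squarefree D) (hC : C ∣ D) (hC0 : 0 < C)
    (hM0 : 0 < M) (hL0 : 0 < L) (hM : M ∣ D) (hL : L ∣ D)
    (hDML : D ∣ M * L) (hMLDC : M * L ∣ D * C)
    (f : ℕ) (hf0 : 0 < f) (hf : f ∣ Nat.gcd M L)
    (χ : DirichletCharacter ℂ f) (hχprim : χ.IsPrimitive) (hχquad : χ ^ 2 = 1)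
    (m : ℕ) (η : DirichletCharacter ℂ m) (hm : Nat.gcd m D = 1)
    (a : ℕ → ℂ)
    (ha : ∀ n : ℕ, a n =
      if 1 < Nat.gcd n (Nat.gcd M L / f) then 0
      else χ (n : ZMod f) * η (n : ZMod m) *
        (∏ p ∈ (D / M).primeFactors, (p : ℂ) ^ (n.factorization p)) *
        (∑ d ∈ n.divisors.filter (fun d => Nat.gcd d (D / f) = 1), (d : ℂ))) :
    ∀ s : ℂ, 2 < s.re →
      LSeriesHasSum a s
        ((∏ p ∈ (M / f).primeFactors,
            (1 - χ (p : ZMod f) * η (p : ZMod m) * (p : ℂ) ^ ((1 : ℂ) - s))) *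
         (∏ p ∈ (L / f).primeFactors,
            (1 - χ (p : ZMod f) * η (p : ZMod m) * (p : ℂ) ^ (-s))) *
         LSeries (fun n : ℕ => χ (n : ZMod f) * η (n : ZMod m)) (s - 1) *
         LSeries (fun n : ℕ => χ (n : ZMod f) * η (n : ZMod m)) s) :=
  stmt_12_general D M L hsq hM hL hDML f hf χ m η a ha
end

section
/- Let D be a positive squarefree integer and C a positive divisor of D. Then Σ_{r ∣ D/C} Σ_{s ∣ C} Σ_{t ∣ C, gcd(s,t) = 1} φ(t) = Σ_{d ∣ D·C} φ(gcd(d, D·C/d)), where the left-hand sums run over positive divisors r of D/C and positive divisors s, t of C with gcd(s, t) = 1, and the right-hand sum runs over all positive divisors d of D·C. Here φ is Euler's totient function. -/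
/-!
Write `D · C = (D / C) · C²`, where `D / C` and `C` are coprime and squarefree.
The right-hand side is `c(D · C)` for the cusp count `c(n) = Σ_{d ∣ n} φ(gcd(d, n / d))`, which is
multiplicative with `c(m) = τ(m)` for squarefree `m` and `c(p²) = p + 1`; hence
`c(D · C) = τ(D / C) · σ(C)`. On the left, for squarefree `C` the divisors of `C` coprime to `t ∣ C`
are exactly the divisors of `C / t`, so the inner double sum is
`Σ_{t ∣ C} φ(t) τ(C / t) = (φ * ζ * ζ)(C) = (id * ζ)(C) = σ(C)`.
-/

open Finset ArithmeticFunction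
open scoped Nat ArithmeticFunction.sigma ArithmeticFunction.zeta

theorem Nat.gcd_mul_mul_of_coprime {a b c d : ℕ} (hcd : c.Coprime d) (hbc : b.Coprime c)
    (had : a.Coprime d) : (a * b).gcd (c * d) = a.gcd c * b.gcd d := by
  rw [hcd.gcd_mul, hbc.gcd_mul_right_cancel, had.gcd_mul_left_cancel]

theorem Squarefree.coprime_div {n d : ℕ} (hn : Squarefree n) (hd : d ∣ n) :
    d.Coprime (n / d) :=
  Nat.coprime_of_squarefree_mul (by rwa [Nat.mul_div_cancel' hd])

theorem Squarefree.filter_coprime_divisors {n t : ℕ} (hn : Squarefree n) (ht : t ∣ n) :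
    {s ∈ n.divisors | s.Coprime t} = (n / t).divisors := by
  have hn0 : n ≠ 0 := hn.ne_zero
  have hnt0 : n / t ≠ 0 :=
    (Nat.div_ne_zero_iff_of_dvd ht).2 ⟨hn0, ne_zero_of_dvd_ne_zero hn0 ht⟩
  ext s
  simp only [mem_filter, Nat.mem_divisors, hn0, hnt0, ne_eq, not_false_eq_true, and_true]
  constructor
  · rintro ⟨hsn, hst⟩
    exact hst.dvd_of_dvd_mul_left (by rwa [Nat.mul_div_cancel' ht])
  · intro hs
    exact ⟨hs.trans (Nat.div_dvd_of_dvd ht), (hn.coprime_div ht).symm.of_dvd_left hs⟩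

theorem Nat.Coprime.sum_divisors_mul_eq_sum_sum {M : Type*} [AddCommMonoid M] {m n : ℕ}
    (hmn : m.Coprime n) (f : ℕ → M) :
    ∑ d ∈ (m * n).divisors, f d = ∑ a ∈ m.divisors, ∑ b ∈ n.divisors, f (a * b) := by
  rw [hmn.divisors_mul, sum_map]
  exact (sum_attach _ fun p : ℕ × ℕ => f (p.1 * p.2)).trans
    (sum_product' _ _ fun a b => f (a * b))

theorem sum_totient_mul_card_divisors_div (n : ℕ) :
    ∑ t ∈ n.divisors, φ t * #(n / t).divisors = σ 1 n := by
  let totient : ArithmeticFunction ℕ := ⟨φ, Nat.totient_zero⟩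
  have h_totient_mul_zeta : totient * ζ = ArithmeticFunction.id := by
    ext m
    rw [mul_zeta_apply, id_apply]
    exact Nat.sum_totient m
  have h_sigma : totient * σ 0 = σ 1 := by
    rw [← zeta_mul_pow_eq_sigma, ← zeta_mul_pow_eq_sigma, pow_zero_eq_zeta, pow_one_eq_id,
      ← mul_assoc, h_totient_mul_zeta, zeta_mul_comm]
  rw [← h_sigma, mul_apply, Nat.sum_divisorsAntidiagonal (fun a b => totient a * σ 0 b)]
  simp [totient, sigma_zero_apply]

/-- The number of cusps of `X₀(n)`. -/
def cuspCount : ArithmeticFunction ℕ :=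
  ⟨fun n => ∑ d ∈ n.divisors, φ (d.gcd (n / d)), by simp⟩

theorem cuspCount_apply (n : ℕ) : cuspCount n = ∑ d ∈ n.divisors, φ (d.gcd (n / d)) := rfl

theorem isMultiplicative_cuspCount : cuspCount.IsMultiplicative := by
  refine IsMultiplicative.iff_ne_zero.2 ⟨by simp [cuspCount_apply], fun {m n} _ _ hmn => ?_⟩
  rw [cuspCount_apply, cuspCount_apply, cuspCount_apply, hmn.sum_divisors_mul_eq_sum_sum,
    sum_mul_sum]
  refine sum_congr rfl fun a ha => sum_congr rfl fun b hb => ?_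
  have ha : a ∣ m := Nat.dvd_of_mem_divisors ha
  have hb : b ∣ n := Nat.dvd_of_mem_divisors hb
  have hcop {x y : ℕ} (hx : x ∣ m) (hy : y ∣ n) : x.Coprime y := hmn.of_dvd hx hy
  rw [← Nat.div_mul_div_comm ha hb,
    Nat.gcd_mul_mul_of_coprime (hcop (Nat.div_dvd_of_dvd ha) (Nat.div_dvd_of_dvd hb))
      (hcop (Nat.div_dvd_of_dvd ha) hb).symm (hcop ha (Nat.div_dvd_of_dvd hb)),
    Nat.totient_mul ((hcop (Nat.div_dvd_of_dvd ha) (Nat.div_dvd_of_dvd hb)).of_dvd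
      (Nat.gcd_dvd_right _ _) (Nat.gcd_dvd_right _ _))]

theorem cuspCount_prime_sq {p : ℕ} (hp : p.Prime) : cuspCount (p ^ 2) = p + 1 := by
  have hp1 := hp.one_lt
  rw [cuspCount_apply, hp.divisors_sq, sum_insert (by simp [hp1.ne', sq, hp.ne_zero]),
    sum_pair hp1.ne']
  simp only [sq, mul_self_pos, ne_eq, hp.ne_zero, not_false_eq_true, Nat.div_self, Nat.div_one,
    mul_div_cancel_right₀, Nat.gcd_one_right, Nat.gcd_one_left, Nat.gcd_self, Nat.totient_one,
    Nat.totient_prime hp]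
  omega

theorem cuspCount_of_squarefree {n : ℕ} (hn : Squarefree n) : cuspCount n = #n.divisors := by
  rw [cuspCount_apply, card_eq_sum_ones]
  refine sum_congr rfl fun d hd => ?_
  rw [(hn.coprime_div (Nat.dvd_of_mem_divisors hd)).gcd_eq_one, Nat.totient_one]

theorem cuspCount_sq_of_squarefree {n : ℕ} (hn : Squarefree n) : cuspCount (n ^ 2) = σ 1 n := by
  have hprime {p : ℕ} (hp : p ∈ n.primeFactors) : p.Prime := Nat.prime_of_mem_primeFactors hp
  conv_lhs => rw [← Nat.prod_primeFactors_of_squarefree hn]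
  rw [← isMultiplicative_sigma.prod_primeFactors hn, ← prod_pow,
    isMultiplicative_cuspCount.map_prod _ _ fun p hp q hq hpq =>
      ((Nat.coprime_primes (hprime hp) (hprime hq)).2 hpq).pow 2 2]
  exact prod_congr rfl fun p hp => by
    rw [cuspCount_prime_sq (hprime hp), sigma_one_apply, (hprime hp).sum_divisors]

theorem Squarefree.sum_divisors_sum_coprime_divisors_totient {n : ℕ} (hn : Squarefree n) :
    ∑ s ∈ n.divisors, ∑ t ∈ n.divisors.filter (fun t => Nat.gcd s t = 1), φ t = σ 1 n :=
  calc ∑ s ∈ n.divisors, ∑ t ∈ n.divisors.filter (fun t => Nat.gcd s t = 1), φ t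
      = ∑ t ∈ n.divisors, ∑ s ∈ {s ∈ n.divisors | s.Coprime t}, φ t :=
        sum_comm' fun s t => by simp only [mem_filter, Nat.Coprime]; tauto
    _ = ∑ t ∈ n.divisors, φ t * #(n / t).divisors := sum_congr rfl fun t ht => by
        rw [sum_const, hn.filter_coprime_divisors (Nat.dvd_of_mem_divisors ht), smul_eq_mul,
          mul_comm]
    _ = σ 1 n := sum_totient_mul_card_divisors_div n

theorem stmt_15_general (D C : ℕ) (hsq : Squarefree D) (hC : C ∣ D) :
    ∑ r ∈ (D / C).divisors, ∑ s ∈ C.divisors,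
        ∑ t ∈ C.divisors.filter (fun t => Nat.gcd s t = 1), Nat.totient t =
      ∑ d ∈ (D * C).divisors, Nat.totient (Nat.gcd d (D * C / d)) := by
  obtain ⟨M, rfl⟩ := hC
  have hC0 : 0 < C := Nat.pos_of_ne_zero (left_ne_zero_of_mul hsq.ne_zero)
  have hcop : M.Coprime (C ^ 2) := (Nat.coprime_of_squarefree_mul hsq).symm.pow_right 2
  rw [Nat.mul_div_cancel_left M hC0, sum_const, smul_eq_mul,
    hsq.of_mul_left.sum_divisors_sum_coprime_divisors_totient, ← cuspCount_apply,
    show C * M * C = M * C ^ 2 by ring, isMultiplicative_cuspCount.map_mul_of_coprime hcop,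
    cuspCount_of_squarefree hsq.of_mul_right, cuspCount_sq_of_squarefree hsq.of_mul_left]

/-- for `D` a positive squarefree integer and `C` a positive divisor of `D`,
`Σ_{r ∣ D/C} Σ_{s ∣ C} Σ_{t ∣ C, gcd(s,t)=1} φ(t) = Σ_{d ∣ D·C} φ(gcd(d, D·C/d))`. -/
theorem stmt_15 (D C : ℕ) (hD : 0 < D) (hsq : Squarefree D) (hC : C ∣ D) (hC0 : 0 < C) :
    ∑ r ∈ (D / C).divisors, ∑ s ∈ C.divisors,
        ∑ t ∈ C.divisors.filter (fun t => Nat.gcd s t = 1), Nat.totient t =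
      ∑ d ∈ (D * C).divisors, Nat.totient (Nat.gcd d (D * C / d)) :=
  stmt_15_general D C hsq hC
end
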